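/- arXiv:2406.11499 — 8 statements merged into one kernel-verified Lean document; each statement's English description precedes it below -/
import Mathlib

section
/- Let K ⊂ ℂ be a compact set satisfying the Markov inequality with constants c_m > 0 and r_m > 0. Then for every n ≥ 1, every polynomial P ∈ ℂ[X] of degree at most n, and all u, v ∈ K, one has |P(v) − P(u)| ≤ ‖P‖_K · (exp(c_m n^{r_m} |v − u|) − 1). -/
open MeasureTheory Finset

/-- Sup norm of a real-valued function over a set `K ⊆ ℂ`. -/
noncomputable def supK (K : Set ℂ) (f : ℂ → ℝ) : ℝ := sSup (f '' K)

theorem stmt0 (K : Set ℂ) (hK : IsCompact K) (c_m r_m : ℝ) (hcm : 0 < c_m) (hrm : 0 < r_m)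
    (hMarkov : ∀ n : ℕ, 1 ≤ n → ∀ P : Polynomial ℂ, P.natDegree ≤ n →
      supK K (fun z => ‖(Polynomial.derivative P).eval z‖) ≤
        c_m * (n : ℝ) ^ r_m * supK K (fun z => ‖P.eval z‖))
    (n : ℕ) (hn : 1 ≤ n) (P : Polynomial ℂ) (hP : P.natDegree ≤ n)
    (u v : ℂ) (hu : u ∈ K) (hv : v ∈ K) :
    ‖P.eval v - P.eval u‖ ≤
      supK K (fun z => ‖P.eval z‖) *
        (Real.exp (c_m * (n : ℝ) ^ r_m * ‖v - u‖) - 1) := by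
  set M : ℝ := c_m * (n : ℝ) ^ r_m with hMdef
  have hnpos : (0 : ℝ) < n := by exact_mod_cast hn
  have hMpos : 0 < M := mul_pos hcm (Real.rpow_pos_of_pos hnpos _)
  set S : ℝ := supK K (fun z => ‖P.eval z‖) with hSdef
  -- pointwise bound by supK
  have key : ∀ Q : Polynomial ℂ, ∀ z ∈ K,
      ‖Q.eval z‖ ≤ supK K (fun z => ‖Q.eval z‖) := by
    intro Q z hz
    apply le_csSup
    · exact (hK.image_of_continuousOn
        ((continuous_norm.comp (Polynomial.continuous Q)).continuousOn)).bddAbove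
    · exact ⟨z, hz, rfl⟩
  have hS0 : 0 ≤ S := le_trans (norm_nonneg _) (key P u hu)
  -- iterated Markov bound
  have iter : ∀ k : ℕ,
      supK K (fun z => ‖(Polynomial.derivative^[k] P).eval z‖) ≤ M ^ k * S := by
    intro k
    induction k with
    | zero => simp [hSdef]
    | succ d hd =>
        have hdeg : (Polynomial.derivative^[d] P).natDegree ≤ n :=
          le_trans (Polynomial.natDegree_iterate_derivative P d)
            (le_trans (Nat.sub_le _ _) hP)
        calc supK K (fun z => ‖(Polynomial.derivative^[d+1] P).eval z‖)
            = supK K (fun z =>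
                ‖(Polynomial.derivative (Polynomial.derivative^[d] P)).eval z‖) := by
              rw [Function.iterate_succ_apply']
          _ ≤ M * supK K (fun z => ‖(Polynomial.derivative^[d] P).eval z‖) :=
              hMarkov n hn _ hdeg
          _ ≤ M * (M ^ d * S) := by
              exact mul_le_mul_of_nonneg_left hd (le_of_lt hMpos)
          _ = M ^ (d + 1) * S := by ring
  -- coefficient bound of the Taylor expansion
  have coeffb : ∀ k : ℕ,
      ‖(Polynomial.taylor u P).coeff k‖ ≤ M ^ k * S / (Nat.factorial k) := by
    intro k
    have h1 : (k.factorial : ℝ) * ‖(Polynomial.taylor u P).coeff k‖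
        = ‖(Polynomial.derivative^[k] P).eval u‖ := by
      rw [Polynomial.taylor_coeff]
      have := congrFun (Polynomial.factorial_smul_hasseDeriv (R := ℂ) (k := k)) P
      rw [← this]
      simp [Polynomial.eval_smul, Complex.norm_natCast, map_mul]
    have h2 : ‖(Polynomial.derivative^[k] P).eval u‖ ≤ M ^ k * S :=
      le_trans (key _ u hu) (iter k)
    have hfac : (0 : ℝ) < (k.factorial : ℝ) := by positivity
    rw [le_div_iff₀ hfac, mul_comm _ ((k.factorial : ℝ))]
    rw [h1]; exact h2
  -- Taylor expansion
  set Q := Polynomial.taylor u P with hQdef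
  have hQdeg : Q.natDegree < n + 1 := by
    rw [hQdef, Polynomial.natDegree_taylor]; omega
  have hev : P.eval v = ∑ i ∈ range (n + 1), Q.coeff i * (v - u) ^ i := by
    have := Polynomial.eval_eq_sum_range' hQdeg (v - u)
    rw [← this, hQdef, Polynomial.taylor_eval, sub_add_cancel]
  have hQ0 : Q.coeff 0 = P.eval u := Polynomial.taylor_coeff_zero u P
  have hdiff : P.eval v - P.eval u = ∑ i ∈ range n, Q.coeff (i + 1) * (v - u) ^ (i + 1) := by
    rw [hev, Finset.sum_range_succ' (fun i => Q.coeff i * (v - u) ^ i) n]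
    simp [hQ0]
  set x : ℝ := ‖v - u‖ with hxdef
  have hx0 : 0 ≤ x := norm_nonneg _
  have habs : ‖P.eval v - P.eval u‖
      ≤ ∑ i ∈ range n, M ^ (i + 1) * S / (Nat.factorial (i + 1)) * x ^ (i + 1) := by
    rw [hdiff]
    refine le_trans (norm_sum_le _ _) (Finset.sum_le_sum ?_)
    intro i _
    rw [norm_mul, norm_pow]
    exact mul_le_mul_of_nonneg_right (coeffb (i + 1)) (pow_nonneg hx0 _)
  have hsum : ∑ i ∈ range n, M ^ (i + 1) * S / (Nat.factorial (i + 1)) * x ^ (i + 1)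
      = S * ∑ i ∈ range n, (M * x) ^ (i + 1) / (Nat.factorial (i + 1)) := by
    rw [Finset.mul_sum]
    refine Finset.sum_congr rfl fun i _ => ?_
    rw [mul_pow]; ring
  have hexp : ∑ i ∈ range n, (M * x) ^ (i + 1) / (Nat.factorial (i + 1))
      ≤ Real.exp (M * x) - 1 := by
    have h := Real.sum_le_exp_of_nonneg (mul_nonneg hMpos.le hx0) (n + 1)
    rw [Finset.sum_range_succ' (fun i => (M * x) ^ i / (Nat.factorial i)) n] at h
    simp only [pow_zero, Nat.factorial_zero, Nat.cast_one, div_one] at h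
    linarith
  calc ‖P.eval v - P.eval u‖
      ≤ S * ∑ i ∈ range n, (M * x) ^ (i + 1) / (Nat.factorial (i + 1)) := by
        rw [← hsum]; exact habs
    _ ≤ S * (Real.exp (M * x) - 1) := mul_le_mul_of_nonneg_left hexp hS0
end

section
/- Let K ⊂ ℂ be a compact set satisfying the Markov inequality with constants c_m > 0 and r_m > 0. Let n ≥ 1, let z_0, …, z_n ∈ K, set π_n(z) = ∏_{j=0}^{n−1}(z − z_j), and assume ‖π_n‖_K > 0 and |π_n(z_n)| ≥ τ ‖π_n‖_K for some τ ∈ (0, 1]. Then for every j ∈ {0, …, n−1}, |z_n − z_j| ≥ ln(1 + τ) / (c_m n^{r_m}). -/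
open MeasureTheory Finset

theorem stmt1 (K : Set ℂ) (hK : IsCompact K) (c_m r_m : ℝ) (hcm : 0 < c_m) (hrm : 0 < r_m)
    (hMarkov : ∀ n : ℕ, 1 ≤ n → ∀ P : Polynomial ℂ, P.natDegree ≤ n →
      supK K (fun z => ‖(Polynomial.derivative P).eval z‖) ≤
        c_m * (n : ℝ) ^ r_m * supK K (fun z => ‖P.eval z‖))
    (n : ℕ) (hn : 1 ≤ n) (z : ℕ → ℂ) (hz : ∀ j, j ≤ n → z j ∈ K)
    (hπpos : 0 < supK K (fun w => ‖(∏ j ∈ Finset.range n, (w - z j))‖))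
    (τ : ℝ) (hτ0 : 0 < τ) (hτ1 : τ ≤ 1)
    (hτleja : τ * supK K (fun w => ‖(∏ j ∈ Finset.range n, (w - z j))‖) ≤
      ‖(∏ j ∈ Finset.range n, (z n - z j))‖)
    (j : ℕ) (hj : j < n) :
    Real.log (1 + τ) / (c_m * (n : ℝ) ^ r_m) ≤ ‖z n - z j‖ := by
  set π : Polynomial ℂ := ∏ i ∈ Finset.range n, (Polynomial.X - Polynomial.C (z i)) with hπdef
  have hev : ∀ w : ℂ, π.eval w = ∏ i ∈ Finset.range n, (w - z i) := by
    intro w; simp [hπdef, Polynomial.eval_prod]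
  set M : ℝ := c_m * (n : ℝ) ^ r_m with hMdef
  have hn0 : (0 : ℝ) < n := by exact_mod_cast hn
  have hM0 : 0 < M := mul_pos hcm (Real.rpow_pos_of_pos hn0 r_m)
  set S : ℝ := supK K (fun w => ‖∏ i ∈ Finset.range n, (w - z i)‖) with hSdef
  have hbdd : ∀ P : Polynomial ℂ,
      BddAbove ((fun w => ‖P.eval w‖) '' K) := fun P =>
    (hK.image (continuous_norm.comp P.continuous)).bddAbove
  have hle : ∀ (P : Polynomial ℂ) (w : ℂ), w ∈ K →
      ‖P.eval w‖ ≤ supK K (fun w => ‖P.eval w‖) := fun P w hw =>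
    le_csSup (hbdd P) ⟨w, hw, rfl⟩
  have hπdeg : π.natDegree ≤ n := by
    refine (Polynomial.natDegree_prod_le _ _).trans ?_
    simp [Polynomial.natDegree_X_sub_C]
  have hiter : ∀ k : ℕ,
      supK K (fun w => ‖(Polynomial.derivative^[k] π).eval w‖) ≤ M ^ k * S := by
    intro k
    induction k with
    | zero => simp only [Function.iterate_zero_apply, pow_zero, one_mul, hSdef]
              exact le_of_eq (by congr 1; ext w; rw [hev])
    | succ k ih =>
        have hdeg : (Polynomial.derivative^[k] π).natDegree ≤ n :=
          (Polynomial.natDegree_iterate_derivative π k).trans ((Nat.sub_le _ _).trans hπdeg)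
        calc supK K (fun w => ‖(Polynomial.derivative^[k+1] π).eval w‖)
            = supK K (fun w =>
                ‖(Polynomial.derivative (Polynomial.derivative^[k] π)).eval w‖) := by
              rw [Function.iterate_succ_apply']
          _ ≤ M * supK K (fun w => ‖(Polynomial.derivative^[k] π).eval w‖) :=
              hMarkov n hn _ hdeg
          _ ≤ M * (M ^ k * S) := by
              exact mul_le_mul_of_nonneg_left ih hM0.le
          _ = M ^ (k+1) * S := by ring
  have hzj : z j ∈ K := hz j hj.le
  have hder : ∀ k : ℕ, ‖(Polynomial.derivative^[k] π).eval (z j)‖ ≤ M ^ k * S :=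
    fun k => (hle _ _ hzj).trans (hiter k)
  have hhasse : ∀ k : ℕ,
      ‖(Polynomial.hasseDeriv k π).eval (z j)‖ ≤ M ^ k * S / (k.factorial : ℝ) := by
    intro k
    have hfact : (k.factorial : ℂ) * (Polynomial.hasseDeriv k π).eval (z j)
        = (Polynomial.derivative^[k] π).eval (z j) := by
      rw [← Polynomial.factorial_smul_hasseDeriv]
      simp [Polynomial.eval_smul, nsmul_eq_mul]
    have hfpos : (0 : ℝ) < (k.factorial : ℝ) := by positivity
    rw [le_div_iff₀ hfpos]
    calc ‖(Polynomial.hasseDeriv k π).eval (z j)‖ * (k.factorial : ℝ)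
        = ‖(k.factorial : ℂ) * (Polynomial.hasseDeriv k π).eval (z j)‖ := by
          rw [norm_mul]; simp [mul_comm]
      _ = ‖(Polynomial.derivative^[k] π).eval (z j)‖ := by rw [hfact]
      _ ≤ M ^ k * S := hder k
  set δ : ℝ := ‖z n - z j‖ with hδdef
  have hδ0 : 0 ≤ δ := norm_nonneg _
  -- Taylor expansion
  have htaylor : π.eval (z n) =
      ∑ k ∈ Finset.range (n + 1),
        (Polynomial.hasseDeriv k π).eval (z j) * (z n - z j) ^ k := by
    have h1 : π.eval (z n) = (Polynomial.taylor (z j) π).eval (z n - z j) :=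
      (Polynomial.taylor_eval_sub (z j) π (z n)).symm
    rw [h1, Polynomial.eval_eq_sum_range' (lt_of_le_of_lt (by
      rw [Polynomial.natDegree_taylor]; exact hπdeg) (Nat.lt_succ_self n))]
    exact Finset.sum_congr rfl fun k _ => by rw [Polynomial.taylor_coeff]
  have hroot : π.eval (z j) = 0 := by
    rw [hev]
    exact Finset.prod_eq_zero (Finset.mem_range.mpr hj) (by ring)
  -- bound |π(z n)|
  have hbound : ‖π.eval (z n)‖ ≤ S * (Real.exp (M * δ) - 1) := by
    calc ‖π.eval (z n)‖
        ≤ ∑ k ∈ Finset.range (n + 1),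
            ‖(Polynomial.hasseDeriv k π).eval (z j) * (z n - z j) ^ k‖ := by
          rw [htaylor]; exact norm_sum_le _ _
      _ = ∑ i ∈ Finset.range n,
            ‖(Polynomial.hasseDeriv (i+1) π).eval (z j) * (z n - z j) ^ (i+1)‖ := by
          rw [Finset.sum_range_succ']
          simp [Polynomial.hasseDeriv_zero', hroot]
      _ ≤ ∑ i ∈ Finset.range n, (M * δ) ^ (i+1) / ((i+1).factorial : ℝ) * S := by
          refine Finset.sum_le_sum fun i _ => ?_
          rw [norm_mul, norm_pow]
          calc ‖(Polynomial.hasseDeriv (i+1) π).eval (z j)‖ * δ ^ (i+1)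
              ≤ M ^ (i+1) * S / ((i+1).factorial : ℝ) * δ ^ (i+1) := by
                exact mul_le_mul_of_nonneg_right (hhasse (i+1)) (pow_nonneg hδ0 _)
            _ = (M * δ) ^ (i+1) / ((i+1).factorial : ℝ) * S := by ring
      _ = (∑ i ∈ Finset.range n, (M * δ) ^ (i+1) / ((i+1).factorial : ℝ)) * S := by
          rw [Finset.sum_mul]
      _ = (∑ k ∈ Finset.range (n+1), (M * δ) ^ k / (k.factorial : ℝ) - 1) * S := by
          rw [Finset.sum_range_succ']
          simp
      _ ≤ (Real.exp (M * δ) - 1) * S := by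
          have := Real.sum_le_exp_of_nonneg (mul_nonneg hM0.le hδ0) (n+1)
          have hS0 : 0 ≤ S := hπpos.le
          nlinarith
      _ = S * (Real.exp (M * δ) - 1) := by ring
  have hτS : τ * S ≤ ‖π.eval (z n)‖ := by rw [hev]; exact hτleja
  have h1 : τ * S ≤ S * (Real.exp (M * δ) - 1) := hτS.trans hbound
  have h2 : τ ≤ Real.exp (M * δ) - 1 := by
    have := (mul_le_mul_iff_left₀ hπpos).mp (by linarith [h1] : τ * S ≤ (Real.exp (M * δ) - 1) * S)
    exact this
  have h3 : Real.log (1 + τ) ≤ M * δ := by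
    rw [Real.log_le_iff_le_exp (by linarith)]
    linarith
  rw [div_le_iff₀ hM0] at *
  · linarith [h3]
end

section
/- Let K ⊂ ℂ be compact and σ a finite Borel measure on K satisfying the Nikolskii inequality with constants c_ℓ > 0 and r_ℓ > 0. Let n ≥ 1, let z_0, …, z_{n−1} ∈ K, let π(z) = ∏_{j=0}^{n−1}(z − z_j), and assume ‖π‖_1 = ∫_K |π| dσ > 0. Let Z be a K-valued random variable whose law is absolutely continuous with respect to σ with density z ↦ |π(z)| / ‖π‖_1. Then for every τ ∈ (0, 1], ℙ(|π(Z)| < τ ‖π‖_∞) ≤ τ σ(K) c_ℓ n^{r_ℓ}, where ‖π‖_∞ denotes the essential supremum of |π| with respect to σ. -/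
open MeasureTheory Finset

/-- σ-essential supremum of a (nonnegative) real-valued function. -/
noncomputable def essSupK (σ : MeasureTheory.Measure ℂ) (f : ℂ → ℝ) : ℝ :=
  (essSup (fun z => ENNReal.ofReal (f z)) σ).toReal

theorem stmt3 {Ω : Type*} [MeasurableSpace Ω] (ℙ : Measure Ω) [IsProbabilityMeasure ℙ]
    (K : Set ℂ) (hK : IsCompact K)
    (σ : Measure ℂ) [IsFiniteMeasure σ] (hσK : σ Kᶜ = 0)
    (c_ℓ r_ℓ : ℝ) (hcℓ : 0 < c_ℓ) (hrℓ : 0 < r_ℓ)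
    (hNik : ∀ m : ℕ, 1 ≤ m → ∀ P : Polynomial ℂ, P.natDegree ≤ m →
      essSupK σ (fun z => ‖P.eval z‖) ≤
        c_ℓ * (m : ℝ) ^ r_ℓ * ∫ z, ‖P.eval z‖ ∂σ)
    (n : ℕ) (hn : 1 ≤ n) (z : ℕ → ℂ) (hz : ∀ j, j < n → z j ∈ K)
    (hπ1 : 0 < ∫ w, ‖∏ j ∈ Finset.range n, (w - z j)‖ ∂σ)
    (Z : Ω → ℂ) (hZmeas : Measurable Z) (hZK : ∀ ω, Z ω ∈ K)
    (hlaw : Measure.map Z ℙ = σ.withDensity fun w =>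
      ENNReal.ofReal (‖∏ j ∈ Finset.range n, (w - z j)‖ /
        ∫ w', ‖∏ j ∈ Finset.range n, (w' - z j)‖ ∂σ))
    (τ : ℝ) (hτ0 : 0 < τ) (hτ1 : τ ≤ 1) :
    (ℙ {ω | ‖∏ j ∈ Finset.range n, (Z ω - z j)‖ <
        τ * essSupK σ (fun w => ‖∏ j ∈ Finset.range n, (w - z j)‖)}).toReal ≤
      τ * (σ K).toReal * c_ℓ * (n : ℝ) ^ r_ℓ := by
  set f : ℂ → ℝ := fun w => ‖∏ j ∈ Finset.range n, (w - z j)‖ with hf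
  set I : ℝ := ∫ w, f w ∂σ with hI
  set M : ℝ := essSupK σ f with hM
  have hMnn : 0 ≤ M := ENNReal.toReal_nonneg
  have hfm : Measurable f :=
    continuous_norm.measurable.comp
      (Finset.measurable_prod _ (fun j _ => measurable_id.sub measurable_const))
  -- Nikolskii for the polynomial ∏ (X - C (z j))
  have hNik' : M ≤ c_ℓ * (n : ℝ) ^ r_ℓ * I := by
    have hdeg : (∏ j ∈ Finset.range n, (Polynomial.X - Polynomial.C (z j))).natDegree ≤ n := by
      refine le_trans (Polynomial.natDegree_prod_le _ _) ?_
      simp [Polynomial.natDegree_X_sub_C]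
    have h := hNik n hn _ hdeg
    simpa [Polynomial.eval_prod, hf, hI, hM] using h
  set S : Set ℂ := {w | f w < τ * M} with hSdef
  have hS : MeasurableSet S := measurableSet_lt hfm measurable_const
  have hmap : ℙ {ω | f (Z ω) < τ * M} = ∫⁻ w in S, ENNReal.ofReal (f w / I) ∂σ := by
    have : ℙ {ω | f (Z ω) < τ * M} = (Measure.map Z ℙ) S :=
      (Measure.map_apply hZmeas hS).symm
    rw [this, hlaw, withDensity_apply _ hS]
  have hbound : ∫⁻ w in S, ENNReal.ofReal (f w / I) ∂σ ≤ ENNReal.ofReal (τ * M / I) * σ K := by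
    calc ∫⁻ w in S, ENNReal.ofReal (f w / I) ∂σ
        ≤ ∫⁻ _ in S, ENNReal.ofReal (τ * M / I) ∂σ := by
          refine setLIntegral_mono measurable_const (fun w hw => ?_)
          exact ENNReal.ofReal_le_ofReal (div_le_div_of_nonneg_right (le_of_lt hw) hπ1.le)
      _ = ENNReal.ofReal (τ * M / I) * σ S := by rw [setLIntegral_const]
      _ ≤ ENNReal.ofReal (τ * M / I) * σ K := by
          refine mul_le_mul_right ?_ _
          calc σ S ≤ σ (K ∪ Kᶜ) := measure_mono (by simp)
            _ ≤ σ K + σ Kᶜ := measure_union_le _ _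
            _ = σ K := by rw [hσK, add_zero]
  have hfin : ENNReal.ofReal (τ * M / I) * σ K ≠ ⊤ :=
    ENNReal.mul_ne_top ENNReal.ofReal_ne_top (measure_ne_top σ K)
  have htr : (ℙ {ω | f (Z ω) < τ * M}).toReal ≤ (τ * M / I) * (σ K).toReal := by
    rw [hmap]
    refine le_trans (ENNReal.toReal_mono hfin hbound) ?_
    rw [ENNReal.toReal_mul, ENNReal.toReal_ofReal (by positivity)]
  refine le_trans htr ?_
  have hdiv : M / I ≤ c_ℓ * (n : ℝ) ^ r_ℓ := (div_le_iff₀ hπ1).mpr hNik'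
  have hσnn : (0:ℝ) ≤ (σ K).toReal := ENNReal.toReal_nonneg
  calc (τ * M / I) * (σ K).toReal = (τ * (M / I)) * (σ K).toReal := by ring
    _ ≤ (τ * (c_ℓ * (n : ℝ) ^ r_ℓ)) * (σ K).toReal := by
        refine mul_le_mul_of_nonneg_right ?_ hσnn
        exact mul_le_mul_of_nonneg_left hdiv (le_of_lt hτ0)
    _ = τ * (σ K).toReal * c_ℓ * (n : ℝ) ^ r_ℓ := by ring
end

section
/- Let K ⊂ ℂ be compact and σ a finite Borel measure on K with σ(K) > 0, such that ‖f‖_K = ‖f‖_∞ for every continuous f on K, and such that (K, σ) satisfies the Nikolskii inequality with constants c_ℓ > 0 and r_ℓ > 0. Let (Z_n)_{n ≥ 0} be random Leja points for (K, σ): for every n ≥ 1, conditionally on (Z_0, …, Z_{n−1}), the law of Z_n is absolutely continuous with respect to σ with density proportional to z ↦ |π_n(z)| = ∏_{j=0}^{n−1} |z − Z_j|. Then for every ε > 0, almost surely the points (Z_n) are pairwise distinct and there exists a constant c ∈ (0, 1] (depending on the sample point) such that |π_n(Z_n)| ≥ c n^{−(1 + r_ℓ + ε)} ‖π_n‖_K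 for all n ≥ 1; that is, random Leja points are almost surely pseudo-Leja points of order 1 + r_ℓ + ε for K. -/
open MeasureTheory Finset

/-!
Write `Yₙ = (Z₀, …, Zₙ₋₁)`. Given `Yₙ`, the point `Zₙ` has density `|πₙ| / ‖πₙ‖₁` with respect
to `σ`, so the conditional probability that `|πₙ(Zₙ)| < τ ‖πₙ‖_K` is at most
`τ ‖πₙ‖_K σ(K) / ‖πₙ‖₁`. Since `‖πₙ‖_K = ‖πₙ‖_∞`, the Nikolskii inequality bounds this by
`τ c_ℓ n^{r_ℓ} σ(K)`, which for `τ = n^{-(1 + r_ℓ + ε)}` is summable in `n`. By Borel–Cantelli,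
almost surely `|πₙ(Zₙ)| ≥ τ ‖πₙ‖_K` for all large `n`, and a small enough `c` takes care of the
finitely many remaining `n`, provided `πₙ(Zₙ) ≠ 0`. That holds almost surely because the density
`|πₙ|` vanishes on the zero set of `πₙ`; it also makes the points pairwise distinct.
-/

open Filter Set
open scoped Topology

theorem countable_generatePiSystem {α : Type*} {S : Set (Set α)} (hS : S.Countable) :
    (generatePiSystem S).Countable := by
  refine ((countable_ofPred_finite_subset hS).image sInter).mono fun t ht => ?_
  induction ht with
  | base hs => exact ⟨{_}, ⟨finite_singleton _, singleton_subset_iff.2 hs⟩, sInter_singleton _⟩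
  | inter _ _ _ ihs iht =>
    obtain ⟨T, ⟨hTfin, hTS⟩, rfl⟩ := ihs
    obtain ⟨T', ⟨hT'fin, hT'S⟩, rfl⟩ := iht
    exact ⟨T ∪ T', ⟨hTfin.union hT'fin, union_subset hTS hT'S⟩, sInter_union T T'⟩

-- It suffices to test the countably many sets of a generating π-system.
theorem ae_eq_of_forall_measurableSet_ae_eq {Ω E : Type*} [MeasurableSpace Ω] [MeasurableSpace E]
    [MeasurableSpace.CountablyGenerated E] {μ : Measure Ω} {ν ν' : Ω → Measure E}
    [∀ ω, IsFiniteMeasure (ν ω)] (h : ∀ s, MeasurableSet s → ∀ᵐ ω ∂μ, ν ω s = ν' ω s) :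
    ∀ᵐ ω ∂μ, ν ω = ν' ω := by
  set S := generatePiSystem (MeasurableSpace.countableGeneratingSet E)
  have hS : ∀ᵐ ω ∂μ, ∀ s ∈ S, ν ω s = ν' ω s :=
    (ae_ball_iff (countable_generatePiSystem MeasurableSpace.countable_countableGeneratingSet)).2
      fun s hs => h s (generatePiSystem_measurableSet
        (fun _ => MeasurableSpace.measurableSet_countableGeneratingSet) s hs)
  filter_upwards [hS, h univ MeasurableSet.univ] with ω hω huniv
  refine ext_of_generate_finite S ?_ (isPiSystem_generatePiSystem _) hω huniv
  rw [generateFrom_generatePiSystem_eq, MeasurableSpace.generateFrom_countableGeneratingSet]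

section ConditionalDensity

open ProbabilityTheory

variable {Ω β E : Type*} [MeasurableSpace Ω] [mβ : MeasurableSpace β] [MeasurableSpace E]
  {μ : Measure Ω} {X : Ω → E} {Y : Ω → β}

theorem condDistrib_ae_eq_of_condExp_indicator [StandardBorelSpace E] [Nonempty E]
    [IsFiniteMeasure μ] (hX : Measurable X) (hY : Measurable Y) {ν : Ω → Measure E}
    [∀ ω, IsFiniteMeasure (ν ω)]
    (h : ∀ s, MeasurableSet s → μ⟦X ⁻¹' s | mβ.comap Y⟧ =ᵐ[μ] fun ω => (ν ω).real s) :
    ∀ᵐ ω ∂μ, condDistrib X Y μ (Y ω) = ν ω := by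
  refine ae_eq_of_forall_measurableSet_ae_eq fun s hs => ?_
  filter_upwards [condDistrib_ae_eq_condExp hY hX hs, h s hs] with ω h₁ h₂
  exact (ENNReal.toReal_eq_toReal_iff' (measure_ne_top _ _) (measure_ne_top _ _)).1 (h₁.trans h₂)

theorem measure_preimage_eq_lintegral_condDistrib [StandardBorelSpace E] [Nonempty E]
    [IsFiniteMeasure μ] (hX : Measurable X) (hY : Measurable Y) {A : Set (β × E)}
    (hA : MeasurableSet A) :
    μ ((fun ω => (Y ω, X ω)) ⁻¹' A) =
      ∫⁻ ω, condDistrib X Y μ (Y ω) (Prod.mk (Y ω) ⁻¹' A) ∂μ := by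
  rw [← Measure.map_apply (hY.prodMk hX) hA, ← compProd_map_condDistrib hX.aemeasurable,
    Measure.compProd_apply hA, lintegral_map (Kernel.measurable_kernel_prodMk_left hA) hY]

noncomputable def normalizedWithDensity (σ : Measure E) (f : E → ℝ) : Measure E :=
  σ.withDensity fun w => ENNReal.ofReal (f w / ∫ x, f x ∂σ)

theorem isFiniteMeasure_normalizedWithDensity {σ : Measure E} {f : E → ℝ} (hf : Integrable f σ) :
    IsFiniteMeasure (normalizedWithDensity σ f) :=
  isFiniteMeasure_withDensity_ofReal (hf.div_const _).hasFiniteIntegral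

theorem normalizedWithDensity_apply {σ : Measure E} {f : E → ℝ} (hf : Integrable f σ)
    (hf0 : 0 ≤ f) {s : Set E} (hs : MeasurableSet s) :
    normalizedWithDensity σ f s = ENNReal.ofReal ((∫ w in s, f w ∂σ) / ∫ w, f w ∂σ) := by
  rw [normalizedWithDensity, withDensity_apply _ hs, ← integral_div,
    ofReal_integral_eq_lintegral_ofReal (hf.div_const _).integrableOn
      (ae_of_all _ fun w => div_nonneg (hf0 w) (integral_nonneg hf0))]

variable (μ X Y) in
/-- The conditional law of `X` given `Y` is `normalizedWithDensity σ (p (Y ·))`, tested against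
bounded measurable functions. -/
def HasCondDensity (σ : Measure E) (p : β → E → ℝ) : Prop :=
  ∀ g : E → ℝ, Measurable g → (∀ z, |g z| ≤ 1) →
    μ[fun ω => g (X ω) | mβ.comap Y] =ᵐ[μ]
      fun ω => (∫ w, g w * p (Y ω) w ∂σ) / ∫ w, p (Y ω) w ∂σ

namespace HasCondDensity

variable [StandardBorelSpace E] [Nonempty E] {σ : Measure E} {p : β → E → ℝ}

theorem condDistrib_ae_eq [IsFiniteMeasure μ] (h : HasCondDensity μ X Y σ p) (hX : Measurable X)
    (hY : Measurable Y) (hp0 : ∀ y, 0 ≤ p y) (hp : ∀ y, Integrable (p y) σ) :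
    ∀ᵐ ω ∂μ, condDistrib X Y μ (Y ω) = normalizedWithDensity σ (p (Y ω)) := by
  have : ∀ ω, IsFiniteMeasure (normalizedWithDensity σ (p (Y ω))) := fun ω =>
    isFiniteMeasure_normalizedWithDensity (hp _)
  refine condDistrib_ae_eq_of_condExp_indicator hX hY fun s hs => ?_
  have hind : ∀ f : E → ℝ, (fun w => s.indicator (fun _ => (1 : ℝ)) w * f w) = s.indicator f :=
    fun f => funext fun w => by by_cases hw : w ∈ s <;> simp [hw]
  refine (h _ (measurable_const.indicator hs) fun z => ?_).trans (ae_of_all _ fun ω => ?_)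
  · by_cases hz : z ∈ s <;> simp [hz]
  · simp only [measureReal_def, normalizedWithDensity_apply (hp _) (hp0 _) hs, hind,
      integral_indicator hs]
    exact (ENNReal.toReal_ofReal (div_nonneg (setIntegral_nonneg hs fun w _ => hp0 _ w)
      (integral_nonneg (hp0 _)))).symm

theorem measure_preimage_le [IsProbabilityMeasure μ] (h : HasCondDensity μ X Y σ p)
    (hX : Measurable X) (hY : Measurable Y) (hp0 : ∀ y, 0 ≤ p y) (hp : ∀ y, Integrable (p y) σ)
    {A : Set (β × E)} (hA : MeasurableSet A) {δ : ℝ}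
    (hδ : ∀ y, ∫ w in Prod.mk y ⁻¹' A, p y w ∂σ ≤ δ * ∫ w, p y w ∂σ) :
    μ ((fun ω => (Y ω, X ω)) ⁻¹' A) ≤ ENNReal.ofReal δ := by
  rw [measure_preimage_eq_lintegral_condDistrib hX hY hA]
  calc ∫⁻ ω, condDistrib X Y μ (Y ω) (Prod.mk (Y ω) ⁻¹' A) ∂μ
      ≤ ∫⁻ _, ENNReal.ofReal δ ∂μ := by
        refine lintegral_mono_ae ((h.condDistrib_ae_eq hX hY hp0 hp).mono fun ω hω => ?_)
        rw [hω, normalizedWithDensity_apply (hp _) (hp0 _) (measurable_prodMk_left hA),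
          ENNReal.ofReal_le_ofReal_iff']
        rcases (integral_nonneg (hp0 (Y ω)) : 0 ≤ ∫ w, p (Y ω) w ∂σ).eq_or_lt with hI | hI
        · exact Or.inr (by rw [← hI, div_zero])
        · exact Or.inl ((div_le_iff₀ hI).2 (hδ _))
    _ = ENNReal.ofReal δ := by rw [lintegral_const, measure_univ, mul_one]

end HasCondDensity

end ConditionalDensity

theorem ContinuousOn.integrable_of_measure_compl_eq_zero {X F : Type*} [TopologicalSpace X]
    [T2Space X] [MeasurableSpace X] [OpensMeasurableSpace X] [NormedAddCommGroup F]
    {μ : Measure X} [IsFiniteMeasureOnCompacts μ] {K : Set X} {f : X → F} (hK : IsCompact K)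
    (hμK : μ Kᶜ = 0) (hf : ContinuousOn f K) : Integrable f μ := by
  simpa only [IntegrableOn, Measure.restrict_eq_self_of_ae_mem hμK] using
    hf.integrableOn_compact (μ := μ) hK

theorem ae_eventually_notMem_of_measure_le_rpow {Ω : Type*} [MeasurableSpace Ω] {μ : Measure Ω}
    [IsFiniteMeasure μ] {s : ℕ → Set Ω} {C p : ℝ} (hp : 1 < p)
    (h : ∀ n, 1 ≤ n → μ (s n) ≤ ENNReal.ofReal (C * (n : ℝ) ^ (-p))) :
    ∀ᵐ ω ∂μ, ∀ᶠ n in atTop, ω ∉ s n := by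
  have hsum : Summable fun n : ℕ => C * ((n + 1 : ℕ) : ℝ) ^ (-p) :=
    ((summable_nat_add_iff 1).2 (Real.summable_nat_rpow.2 (by linarith))).mul_left C
  refine ae_eventually_notMem fun htop => hsum.tsum_ofReal_ne_top (top_unique ?_)
  rw [← ENNReal.tsum_add_one_eq_top htop (measure_ne_top _ _)]
  exact ENNReal.tsum_le_tsum fun n => h (n + 1) le_add_self

theorem exists_pos_mul_le_of_eventually_le {u v : ℕ → ℝ} (hu : ∀ n, 1 ≤ n → 0 < u n)
    (hv : ∀ n, 0 ≤ v n) (h : ∀ᶠ n in atTop, v n ≤ u n) :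
    ∃ c : ℝ, 0 < c ∧ c ≤ 1 ∧ ∀ n, 1 ≤ n → c * v n ≤ u n := by
  obtain ⟨N, hN⟩ := eventually_atTop.1 h
  have hsmall : ∀ᶠ c in 𝓝 (0 : ℝ), c ≤ 1 ∧ ∀ n ∈ Finset.Icc 1 N, c * v n < u n := by
    refine (eventually_le_nhds one_pos).and ((eventually_all_finset _).2 fun n hn => ?_)
    exact (continuous_id.mul continuous_const).continuousAt.eventually_lt continuousAt_const
      (by simpa using hu n (Finset.mem_Icc.1 hn).1)
  obtain ⟨c, ⟨hc1, hcN⟩, hc0⟩ := ((hsmall.filter_mono nhdsWithin_le_nhds).and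
    (self_mem_nhdsWithin (s := Ioi 0))).exists
  refine ⟨c, hc0, hc1, fun n hn => ?_⟩
  rcases le_or_gt n N with hnN | hNn
  · exact (hcN n (Finset.mem_Icc.2 ⟨hn, hnN⟩)).le
  · exact (mul_le_of_le_one_left (hv n) hc1).trans (hN n hNn.le)

theorem injective_of_prod_range_sub_ne_zero {R : Type*} [CommRing R] {z : ℕ → R}
    (h : ∀ n, 1 ≤ n → ∏ j ∈ range n, (z n - z j) ≠ 0) : Function.Injective z :=
  Function.Injective.of_lt_imp_ne fun i j hij hz =>
    h j (by omega) (prod_eq_zero (mem_range.2 hij) (by rw [hz, sub_self]))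

noncomputable def nodalNorm {n : ℕ} (y : Fin n → ℂ) (w : ℂ) : ℝ := ‖∏ j, (w - y j)‖

theorem nodalNorm_nonneg {n : ℕ} (y : Fin n → ℂ) : 0 ≤ nodalNorm y := fun _ => norm_nonneg _

theorem nodalNorm_eq_norm_prod_range (z : ℕ → ℂ) (n : ℕ) (w : ℂ) :
    nodalNorm (fun j : Fin n => z j) w = ‖∏ j ∈ range n, (w - z j)‖ := by
  rw [nodalNorm, Fin.prod_univ_eq_prod_range (fun j => w - z j)]

theorem nodalNorm_eq_norm_eval_nodal {n : ℕ} (y : Fin n → ℂ) (w : ℂ) :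
    nodalNorm y w = ‖(Lagrange.nodal univ y).eval w‖ := by
  rw [Lagrange.eval_nodal, nodalNorm]

theorem continuous_nodalNorm_uncurry (n : ℕ) :
    Continuous fun q : (Fin n → ℂ) × ℂ => nodalNorm q.1 q.2 := by
  unfold nodalNorm
  fun_prop

theorem continuous_nodalNorm {n : ℕ} (y : Fin n → ℂ) : Continuous (nodalNorm y) :=
  (continuous_nodalNorm_uncurry n).comp (Continuous.prodMk_right y)

theorem supK_nodalNorm_le {K : Set ℂ} {σ : Measure ℂ} {c r : ℝ}
    (hlinf : ∀ f : ℂ → ℝ, ContinuousOn f K →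
      supK K (fun z => |f z|) = essSupK σ (fun z => |f z|))
    (hNik : ∀ m : ℕ, 1 ≤ m → ∀ P : Polynomial ℂ, P.natDegree ≤ m →
      essSupK σ (fun z => ‖P.eval z‖) ≤ c * (m : ℝ) ^ r * ∫ z, ‖P.eval z‖ ∂σ)
    {n : ℕ} (hn : 1 ≤ n) (y : Fin n → ℂ) :
    supK K (nodalNorm y) ≤ c * (n : ℝ) ^ r * ∫ w, nodalNorm y w ∂σ := by
  have hsup : supK K (nodalNorm y) = essSupK σ (nodalNorm y) := by
    simpa only [abs_of_nonneg (nodalNorm_nonneg y _)] using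
      hlinf (nodalNorm y) (continuous_nodalNorm y).continuousOn
  have hP : nodalNorm y = fun z => ‖(Lagrange.nodal univ y).eval z‖ :=
    funext (nodalNorm_eq_norm_eval_nodal y)
  rw [hsup, hP]
  exact hNik n hn _ (by rw [Lagrange.natDegree_nodal, card_univ, Fintype.card_fin])

theorem supK_nodalNorm_nonneg (K : Set ℂ) {n : ℕ} (y : Fin n → ℂ) : 0 ≤ supK K (nodalNorm y) :=
  Real.sSup_nonneg (by rintro _ ⟨w, -, rfl⟩; exact nodalNorm_nonneg y w)

def pseudoLejaFailSet (K : Set ℂ) (a : ℝ) (n : ℕ) : Set ((Fin n → ℂ) × ℂ) :=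
  {q | nodalNorm q.1 q.2 < (n : ℝ) ^ a * supK K (nodalNorm q.1)}

theorem isOpen_pseudoLejaFailSet {K : Set ℂ} (hK : IsCompact K) (a : ℝ) (n : ℕ) :
    IsOpen (pseudoLejaFailSet K a n) :=
  isOpen_lt (continuous_nodalNorm_uncurry n)
    (continuous_const.mul ((hK.continuous_sSup (continuous_nodalNorm_uncurry n)).comp
      continuous_fst))

theorem setIntegral_nodalNorm_pseudoLejaFailSet_le {K : Set ℂ} {σ : Measure ℂ}
    [IsFiniteMeasure σ] {c r : ℝ} (a : ℝ) {n : ℕ} (hn : 1 ≤ n) (y : Fin n → ℂ)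
    (hS : supK K (nodalNorm y) ≤ c * (n : ℝ) ^ r * ∫ w, nodalNorm y w ∂σ) :
    ∫ w in Prod.mk y ⁻¹' pseudoLejaFailSet K a n, nodalNorm y w ∂σ ≤
      c * σ.real univ * (n : ℝ) ^ (a + r) * ∫ w, nodalNorm y w ∂σ := by
  have hn0 : (0 : ℝ) < n := by exact_mod_cast hn
  have hbound : 0 ≤ (n : ℝ) ^ a * supK K (nodalNorm y) :=
    mul_nonneg (by positivity) (supK_nodalNorm_nonneg K y)
  calc ∫ w in Prod.mk y ⁻¹' pseudoLejaFailSet K a n, nodalNorm y w ∂σ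
      ≤ (n : ℝ) ^ a * supK K (nodalNorm y) * σ.real (Prod.mk y ⁻¹' pseudoLejaFailSet K a n) :=
        (Real.le_norm_self _).trans (norm_setIntegral_le_of_norm_le_const (measure_lt_top _ _)
          fun w hw => (Real.norm_of_nonneg (nodalNorm_nonneg y w)).trans_le (le_of_lt hw))
    _ ≤ (n : ℝ) ^ a * supK K (nodalNorm y) * σ.real univ :=
        mul_le_mul_of_nonneg_left (measureReal_mono (subset_univ _)) hbound
    _ ≤ (n : ℝ) ^ a * (c * (n : ℝ) ^ r * ∫ w, nodalNorm y w ∂σ) * σ.real univ := by gcongr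
    _ = c * σ.real univ * (n : ℝ) ^ (a + r) * ∫ w, nodalNorm y w ∂σ := by
        rw [Real.rpow_add hn0]; ring

theorem integrable_nodalNorm {K : Set ℂ} (hK : IsCompact K) {σ : Measure ℂ} [IsFiniteMeasure σ]
    (hσK : σ Kᶜ = 0) {n : ℕ} (y : Fin n → ℂ) : Integrable (nodalNorm y) σ :=
  (continuous_nodalNorm y).continuousOn.integrable_of_measure_compl_eq_zero hK hσK

namespace HasCondDensity

variable {Ω : Type*} [MeasurableSpace Ω] {μ : Measure Ω} [IsProbabilityMeasure μ] {K : Set ℂ}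
  {σ : Measure ℂ} [IsFiniteMeasure σ] {n : ℕ} {X : Ω → ℂ} {Y : Ω → Fin n → ℂ}

theorem ae_nodalNorm_ne_zero (h : HasCondDensity μ X Y σ nodalNorm) (hX : Measurable X)
    (hY : Measurable Y) (hK : IsCompact K) (hσK : σ Kᶜ = 0) :
    ∀ᵐ ω ∂μ, nodalNorm (Y ω) (X ω) ≠ 0 := by
  have h0 := h.measure_preimage_le hX hY nodalNorm_nonneg (integrable_nodalNorm hK hσK)
    (isClosed_eq (continuous_nodalNorm_uncurry n) continuous_const).measurableSet (δ := 0)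
    fun y => by rw [zero_mul]; exact (setIntegral_eq_zero_of_forall_eq_zero fun w hw => hw).le
  exact ae_iff.2 (by simpa using h0)

theorem measure_pseudoLejaFailSet_le (h : HasCondDensity μ X Y σ nodalNorm) (hX : Measurable X)
    (hY : Measurable Y) (hK : IsCompact K) (hσK : σ Kᶜ = 0) {c r : ℝ}
    (hlinf : ∀ f : ℂ → ℝ, ContinuousOn f K →
      supK K (fun z => |f z|) = essSupK σ (fun z => |f z|))
    (hNik : ∀ m : ℕ, 1 ≤ m → ∀ P : Polynomial ℂ, P.natDegree ≤ m →
      essSupK σ (fun z => ‖P.eval z‖) ≤ c * (m : ℝ) ^ r * ∫ z, ‖P.eval z‖ ∂σ)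
    (hn : 1 ≤ n) (a : ℝ) :
    μ ((fun ω => (Y ω, X ω)) ⁻¹' pseudoLejaFailSet K a n) ≤
      ENNReal.ofReal (c * σ.real univ * (n : ℝ) ^ (a + r)) :=
  h.measure_preimage_le hX hY nodalNorm_nonneg (integrable_nodalNorm hK hσK)
    (isOpen_pseudoLejaFailSet hK a n).measurableSet fun y =>
      setIntegral_nodalNorm_pseudoLejaFailSet_le a hn y (supK_nodalNorm_le hlinf hNik hn y)

end HasCondDensity

theorem stmt4_general {Ω : Type*} [MeasurableSpace Ω] (ℙ : Measure Ω) [IsProbabilityMeasure ℙ]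
    (K : Set ℂ) (hK : IsCompact K)
    (σ : Measure ℂ) [IsFiniteMeasure σ] (hσK : σ Kᶜ = 0)
    (hlinf : ∀ f : ℂ → ℝ, ContinuousOn f K →
      supK K (fun z => |f z|) = essSupK σ (fun z => |f z|))
    (c_ℓ r_ℓ : ℝ)
    (hNik : ∀ m : ℕ, 1 ≤ m → ∀ P : Polynomial ℂ, P.natDegree ≤ m →
      essSupK σ (fun z => ‖P.eval z‖) ≤
        c_ℓ * (m : ℝ) ^ r_ℓ * ∫ z, ‖P.eval z‖ ∂σ)
    -- the random Leja points
    (Z : ℕ → Ω → ℂ) (hZmeas : ∀ n, Measurable (Z n))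
    -- conditionally on (Z_0, …, Z_{n−1}), the law of Z_n has density proportional
    -- to |π_n| with respect to σ
    (hcond : ∀ n : ℕ, 1 ≤ n → ∀ g : ℂ → ℝ, Measurable g → (∀ z, |g z| ≤ 1) →
      ℙ[(fun ω => g (Z n ω)) |
          MeasurableSpace.comap (fun ω (j : Fin n) => Z j ω)
            (inferInstance : MeasurableSpace (Fin n → ℂ))]
        =ᵐ[ℙ] fun ω =>
          (∫ w, g w * ‖∏ j ∈ Finset.range n, (w - Z j ω)‖ ∂σ) /
            ∫ w, ‖∏ j ∈ Finset.range n, (w - Z j ω)‖ ∂σ)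
    (ε : ℝ) (hε : 0 < ε) :
    ∀ᵐ ω ∂ℙ, (∀ i j : ℕ, i ≠ j → Z i ω ≠ Z j ω) ∧
      ∃ c : ℝ, 0 < c ∧ c ≤ 1 ∧ ∀ n : ℕ, 1 ≤ n →
        c * (n : ℝ) ^ (-(1 + r_ℓ + ε)) *
            supK K (fun w => ‖∏ j ∈ Finset.range n, (w - Z j ω)‖) ≤
          ‖∏ j ∈ Finset.range n, (Z n ω - Z j ω)‖ := by
  set Y : ∀ n, Ω → Fin n → ℂ := fun n ω j => Z j ω
  have hY : ∀ n, Measurable (Y n) := fun n => measurable_pi_lambda _ fun j => hZmeas j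
  have hprod : ∀ n ω w, ‖∏ j ∈ range n, (w - Z j ω)‖ = nodalNorm (Y n ω) w := fun n ω w =>
    (nodalNorm_eq_norm_prod_range (Z · ω) n w).symm
  have hdens : ∀ n, 1 ≤ n → HasCondDensity ℙ (Z n) (Y n) σ nodalNorm := fun n hn g hg hg1 => by
    simpa only [hprod] using hcond n hn g hg hg1
  have hnodes : ∀ᵐ ω ∂ℙ, ∀ n, 1 ≤ n → nodalNorm (Y n ω) (Z n ω) ≠ 0 :=
    ae_all_iff.2 fun n => (em (1 ≤ n)).elim
      (fun hn => ((hdens n hn).ae_nodalNorm_ne_zero (hZmeas n) (hY n) hK hσK).mono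
        fun _ hω _ => hω)
      fun hn => ae_of_all _ fun _ h => absurd h hn
  have hfail : ∀ᵐ ω ∂ℙ, ∀ᶠ n in atTop,
      (Y n ω, Z n ω) ∉ pseudoLejaFailSet K (-(1 + r_ℓ + ε)) n :=
    ae_eventually_notMem_of_measure_le_rpow (p := 1 + ε) (by linarith) fun n hn =>
      ((hdens n hn).measure_pseudoLejaFailSet_le (hZmeas n) (hY n) hK hσK hlinf hNik hn
        _).trans_eq (by rw [show -(1 + r_ℓ + ε) + r_ℓ = -(1 + ε) by ring])
  filter_upwards [hnodes, hfail] with ω hω0 hωfail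
  simp only [hprod, mul_assoc]
  refine ⟨fun i j => (injective_of_prod_range_sub_ne_zero (z := (Z · ω)) fun n hn =>
    norm_ne_zero_iff.1 (by rw [hprod]; exact hω0 n hn)).ne, ?_⟩
  exact exists_pos_mul_le_of_eventually_le
    (fun n hn => (nodalNorm_nonneg _ _).lt_of_ne (hω0 n hn).symm)
    (fun n => mul_nonneg (by positivity) (supK_nodalNorm_nonneg K _))
    (hωfail.mono fun n hn => not_lt.1 hn)

theorem stmt4 {Ω : Type*} [MeasurableSpace Ω] (ℙ : Measure Ω) [IsProbabilityMeasure ℙ]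
    (K : Set ℂ) (hK : IsCompact K)
    (σ : Measure ℂ) [IsFiniteMeasure σ] (hσK : σ Kᶜ = 0) (hσpos : 0 < σ K)
    (hlinf : ∀ f : ℂ → ℝ, ContinuousOn f K →
      supK K (fun z => |f z|) = essSupK σ (fun z => |f z|))
    (c_ℓ r_ℓ : ℝ) (hcℓ : 0 < c_ℓ) (hrℓ : 0 < r_ℓ)
    (hNik : ∀ m : ℕ, 1 ≤ m → ∀ P : Polynomial ℂ, P.natDegree ≤ m →
      essSupK σ (fun z => ‖P.eval z‖) ≤
        c_ℓ * (m : ℝ) ^ r_ℓ * ∫ z, ‖P.eval z‖ ∂σ)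
    -- the random Leja points
    (Z : ℕ → Ω → ℂ) (hZmeas : ∀ n, Measurable (Z n)) (hZK : ∀ n ω, Z n ω ∈ K)
    (hpos : ∀ n : ℕ, 1 ≤ n → ∀ᵐ ω ∂ℙ,
      0 < ∫ w, ‖∏ j ∈ Finset.range n, (w - Z j ω)‖ ∂σ)
    -- conditionally on (Z_0, …, Z_{n−1}), the law of Z_n has density proportional
    -- to |π_n| with respect to σ
    (hcond : ∀ n : ℕ, 1 ≤ n → ∀ g : ℂ → ℝ, Measurable g → (∀ z, |g z| ≤ 1) →
      ℙ[(fun ω => g (Z n ω)) |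
          MeasurableSpace.comap (fun ω (j : Fin n) => Z j ω)
            (inferInstance : MeasurableSpace (Fin n → ℂ))]
        =ᵐ[ℙ] fun ω =>
          (∫ w, g w * ‖∏ j ∈ Finset.range n, (w - Z j ω)‖ ∂σ) /
            ∫ w, ‖∏ j ∈ Finset.range n, (w - Z j ω)‖ ∂σ)
    (ε : ℝ) (hε : 0 < ε) :
    ∀ᵐ ω ∂ℙ, (∀ i j : ℕ, i ≠ j → Z i ω ≠ Z j ω) ∧
      ∃ c : ℝ, 0 < c ∧ c ≤ 1 ∧ ∀ n : ℕ, 1 ≤ n →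
        c * (n : ℝ) ^ (-(1 + r_ℓ + ε)) *
            supK K (fun w => ‖∏ j ∈ Finset.range n, (w - Z j ω)‖) ≤
          ‖∏ j ∈ Finset.range n, (Z n ω - Z j ω)‖ :=
  stmt4_general ℙ K hK σ hσK hlinf c_ℓ r_ℓ hNik Z hZmeas hcond ε hε
end

section
/- Let K ⊂ ℂ be compact and σ a finite Borel measure on K with σ(K) > 0, such that ‖f‖_K = ‖f‖_∞ for every continuous f on K, such that (K, σ) satisfies the Nikolskii inequality with constants c_ℓ > 0, r_ℓ > 0, and such that K satisfies the Markov inequality with constants c_m > 0, r_m > 0. Let (Z_n)_{n ≥ 0} be random Leja points for (K, σ): for every n ≥ 1, conditionally on (Z_0, …, Z_{n−1}), the law of Z_n is absolutely continuous with respect to σ with density proportional to z ↦ ∏_{j=0}^{n−1} |z − Z_j|. Then for every ε > 0, almost surely there exists a constant c > 0 (depending on the sample point) such that min_{0 ≤ j ≤ n−1} |Z_n − Z_j| ≥ c n^{−(1 + r_m + r_ℓ + ε)} for all n ≥ 1. -/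
set_option maxHeartbeats 1000000


open MeasureTheory Finset

open Polynomial
open scoped ENNReal NNReal

namespace Stmt5Aux
noncomputable def pZ (n : ℕ) (v : Fin n → ℂ) : Polynomial ℂ :=
  ∏ j : Fin n, (X - C (v j))

lemma pZ_monic (n : ℕ) (v : Fin n → ℂ) : (pZ n v).Monic :=
  monic_prod_of_monic _ _ (fun j _ => monic_X_sub_C _)

lemma pZ_natDegree (n : ℕ) (v : Fin n → ℂ) : (pZ n v).natDegree = n := by
  rw [pZ, natDegree_prod_of_monic _ _ (fun j _ => monic_X_sub_C _)]
  simp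

lemma pZ_eval (n : ℕ) (v : Fin n → ℂ) (w : ℂ) :
    (pZ n v).eval w = ∏ j : Fin n, (w - v j) := by
  simp [pZ, eval_prod]

/-- |pZ| evaluated -/
noncomputable def eA (n : ℕ) (v : Fin n → ℂ) (w : ℂ) : ℝ := ‖(pZ n v).eval w‖

lemma eA_eq_prod (n : ℕ) (v : Fin n → ℂ) (w : ℂ) :
    eA n v w = ‖∏ j : Fin n, (w - v j)‖ := by rw [eA, pZ_eval]

lemma eA_nonneg (n : ℕ) (v : Fin n → ℂ) (w : ℂ) : 0 ≤ eA n v w := norm_nonneg _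

lemma eA_cont (n : ℕ) : Continuous fun p : (Fin n → ℂ) × ℂ => eA n p.1 p.2 := by
  simp only [eA_eq_prod]
  exact continuous_norm.comp <| continuous_finset_prod _ fun j _ =>
    continuous_snd.sub ((continuous_apply j).comp continuous_fst)

noncomputable def II (σ : Measure ℂ) (n : ℕ) (v : Fin n → ℂ) : ℝ := ∫ w, eA n v w ∂σ



variable {K : Set ℂ}

lemma le_supK (hK : IsCompact K) {f : ℂ → ℝ} (hf : ContinuousOn f K) {z : ℂ} (hz : z ∈ K) :
    f z ≤ supK K f :=
  le_csSup (hK.image_of_continuousOn hf).bddAbove ⟨z, hz, rfl⟩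

lemma contAbs (P : Polynomial ℂ) : Continuous fun z => ‖P.eval z‖ :=
  continuous_norm.comp P.continuous

lemma supK_nonneg (hK : IsCompact K) (hne : K.Nonempty) (P : Polynomial ℂ) :
    0 ≤ supK K (fun z => ‖P.eval z‖) := by
  obtain ⟨z, hz⟩ := hne
  exact le_trans (norm_nonneg _) (le_supK hK (contAbs P).continuousOn hz)

lemma supK_eval_le (hK : IsCompact K) {z : ℂ} (hz : z ∈ K) (P : Polynomial ℂ) :
    ‖P.eval z‖ ≤ supK K (fun z => ‖P.eval z‖) :=
  le_supK hK (contAbs P).continuousOn hz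

section Markov

variable {c_m r_m : ℝ}
variable (hMarkov : ∀ m : ℕ, 1 ≤ m → ∀ P : Polynomial ℂ, P.natDegree ≤ m →
      supK K (fun z => ‖(Polynomial.derivative P).eval z‖) ≤
        c_m * (m : ℝ) ^ r_m * supK K (fun z => ‖P.eval z‖))

include hMarkov

lemma markov_zero (hK : IsCompact K) (hne : K.Nonempty) (P : Polynomial ℂ)
    (h : supK K (fun z => ‖P.eval z‖) = 0) :
    supK K (fun z => ‖(Polynomial.derivative P).eval z‖) = 0 := by
  have h1 := hMarkov (P.natDegree + 1) (Nat.le_add_left 1 _) P (Nat.le_succ _)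
  rw [h, mul_zero] at h1
  exact le_antisymm h1 (supK_nonneg hK hne _)

lemma supK_pos (hK : IsCompact K) (hne : K.Nonempty) (P : Polynomial ℂ) (hP : P.Monic) :
    0 < supK K (fun z => ‖P.eval z‖) := by
  obtain ⟨z0, hz0⟩ := hne
  rcases lt_or_ge 0 (supK K (fun z => ‖P.eval z‖)) with h | h
  · exact h
  exfalso
  have h0 : supK K (fun z => ‖P.eval z‖) = 0 :=
    le_antisymm h (supK_nonneg hK ⟨z0, hz0⟩ P)
  have hall : ∀ k : ℕ, supK K (fun z => ‖(Polynomial.derivative^[k] P).eval z‖) = 0 := by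
    intro k
    induction k with
    | zero => simpa using h0
    | succ k ih =>
      rw [Function.iterate_succ_apply']
      exact markov_zero hMarkov hK ⟨z0, hz0⟩ _ ih
  set d := P.natDegree
  have hR : Polynomial.derivative^[d] P = Polynomial.C ((d.factorial : ℂ)) := by
    have hd : (Polynomial.derivative^[d] P).natDegree ≤ 0 := by
      have := P.natDegree_iterate_derivative d
      omega
    have hc : (Polynomial.derivative^[d] P).coeff 0 = (d.factorial : ℂ) := by
      rw [Polynomial.coeff_iterate_derivative]
      simp [Nat.descFactorial_self, hP.coeff_natDegree, d]
    rw [Polynomial.eq_C_of_natDegree_le_zero hd, hc]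
  have h2 := le_trans (supK_eval_le hK hz0 (Polynomial.derivative^[d] P)) (le_of_eq (hall d))
  rw [hR] at h2
  simp only [Polynomial.eval_C] at h2
  have : (0:ℝ) < ‖(d.factorial : ℂ)‖ := by
    rw [Complex.norm_natCast]
    exact_mod_cast d.factorial_pos
  linarith

lemma div_bound (hK : IsCompact K) (hne : K.Nonempty) (hcm : 0 < c_m)
    {n : ℕ} (hn : 1 ≤ n) {P : Polynomial ℂ} (hdeg : P.natDegree ≤ n)
    {a : ℂ} (hroot : P.IsRoot a) :
    supK K (fun z => ‖(P /ₘ (X - C a)).eval z‖) ≤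
      2 * (c_m * (n : ℝ) ^ r_m) * supK K (fun z => ‖P.eval z‖) := by
  set Q := P /ₘ (X - C a) with hQdef
  have hPQ : (X - C a) * Q = P := mul_divByMonic_eq_iff_isRoot.mpr hroot
  have hnpos : (0:ℝ) < (n:ℝ) := by exact_mod_cast hn
  set β : ℝ := c_m * (n:ℝ) ^ r_m with hβdef
  have hβ : 0 < β := mul_pos hcm (Real.rpow_pos_of_pos hnpos _)
  by_cases hQ0 : Q = 0
  · rw [hQ0]
    have h1 : supK K (fun z => ‖(0 : Polynomial ℂ).eval z‖) ≤ 0 := by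
      apply csSup_le
      · obtain ⟨z, hz⟩ := hne; exact ⟨_, z, hz, rfl⟩
      · rintro x ⟨w, hw, rfl⟩; simp
    have h2 : (0:ℝ) ≤ 2 * β * supK K (fun z => ‖P.eval z‖) := by
      have := supK_nonneg hK hne P
      positivity
    exact le_trans h1 h2
  · have hQdeg : Q.natDegree ≤ n := by
      have hX0 : (X - C a : Polynomial ℂ) ≠ 0 := Polynomial.X_sub_C_ne_zero a
      have hPne : P ≠ 0 := by rw [← hPQ]; exact mul_ne_zero hX0 hQ0
      have := Polynomial.natDegree_mul hX0 hQ0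
      rw [hPQ, Polynomial.natDegree_X_sub_C] at this
      omega
    -- max point of |Q|
    obtain ⟨z0, hz0K, hz0max⟩ := hK.exists_isMaxOn hne (contAbs Q).continuousOn
    have hsupQ : supK K (fun z => ‖Q.eval z‖) = ‖Q.eval z0‖ := by
      apply le_antisymm
      · apply csSup_le
        · exact ⟨‖Q.eval z0‖, z0, hz0K, rfl⟩
        · rintro x ⟨w, hw, rfl⟩; exact hz0max hw
      · exact supK_eval_le hK hz0K Q
    set MQ := ‖Q.eval z0‖ with hMQdef
    set MP := supK K (fun z => ‖P.eval z‖) with hMPdef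
    have hMP0 : 0 ≤ MP := supK_nonneg hK hne P
    have hMQ0 : 0 ≤ MQ := norm_nonneg _
    have hMarkP : supK K (fun z => ‖(Polynomial.derivative P).eval z‖) ≤ β * MP :=
      hMarkov n hn P hdeg
    have hMarkQ : supK K (fun z => ‖(Polynomial.derivative Q).eval z‖) ≤ β * MQ := by
      rw [← hsupQ]; exact hMarkov n hn Q hQdeg
    have hevalP : P.eval z0 = (z0 - a) * Q.eval z0 := by
      rw [← hPQ]; simp
    rw [hsupQ]
    by_cases hcase : 1 ≤ 2 * β * ‖z0 - a‖
    · have h1 : MQ ≤ MQ * (2 * β * ‖z0 - a‖) := by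
        nlinarith
      have h2 : MQ * (2 * β * ‖z0 - a‖) = 2 * β * ‖P.eval z0‖ := by
        rw [hevalP, norm_mul]; ring
      have h3 : ‖P.eval z0‖ ≤ MP := supK_eval_le hK hz0K P
      calc MQ ≤ 2 * β * ‖P.eval z0‖ := by rw [← h2]; exact h1
        _ ≤ 2 * β * MP := by nlinarith
    · push_neg at hcase
      have habs : ‖z0 - a‖ * β ≤ 1 / 2 := by nlinarith [norm_nonneg (z0 - a)]
      have hderiv : Polynomial.derivative P = Q + (X - C a) * Polynomial.derivative Q := by
        rw [← hPQ, Polynomial.derivative_mul]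
        simp [Polynomial.derivative_X_sub_C]
      have hQz0 : Q.eval z0 = (Polynomial.derivative P).eval z0
          - (z0 - a) * (Polynomial.derivative Q).eval z0 := by
        rw [hderiv]; simp only [Polynomial.eval_add, Polynomial.eval_mul, Polynomial.eval_sub, Polynomial.eval_X, Polynomial.eval_C]; ring
      have h1 : MQ ≤ ‖(Polynomial.derivative P).eval z0‖
          + ‖z0 - a‖ * ‖(Polynomial.derivative Q).eval z0‖ := by
        rw [hMQdef, hQz0]
        calc ‖_‖ ≤ ‖(Polynomial.derivative P).eval z0‖
              + ‖(z0 - a) * (Polynomial.derivative Q).eval z0‖ :=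
            norm_sub_le _ _
          _ = _ := by rw [norm_mul]
      have h2 : ‖(Polynomial.derivative P).eval z0‖ ≤ β * MP :=
        le_trans (supK_eval_le hK hz0K _) hMarkP
      have h3 : ‖(Polynomial.derivative Q).eval z0‖ ≤ β * MQ :=
        le_trans (supK_eval_le hK hz0K _) hMarkQ
      nlinarith [norm_nonneg (z0 - a), norm_nonneg ((Polynomial.derivative Q).eval z0)]

lemma separation (hK : IsCompact K) (hne : K.Nonempty) (hcm : 0 < c_m)
    {n : ℕ} (hn : 1 ≤ n) (v : Fin n → ℂ) {b : ℂ} (hb : b ∈ K)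
    {θ : ℝ} (hθ : θ * supK K (fun w => ‖(pZ n v).eval w‖) ≤
      ‖(pZ n v).eval b‖) :
    ∀ j : Fin n, θ ≤ 2 * (c_m * (n : ℝ) ^ r_m) * ‖b - v j‖ := by
  intro j
  set p := pZ n v with hpdef
  have hM : 0 < supK K (fun z => ‖p.eval z‖) :=
    supK_pos hMarkov hK hne p (pZ_monic n v)
  have hroot : p.IsRoot (v j) := by
    rw [IsRoot, pZ_eval]
    exact Finset.prod_eq_zero (Finset.mem_univ j) (sub_self _)
  set Q := p /ₘ (X - C (v j)) with hQdef
  have hPQ : (X - C (v j)) * Q = p := mul_divByMonic_eq_iff_isRoot.mpr hroot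
  have hQb : ‖Q.eval b‖ ≤
      2 * (c_m * (n : ℝ) ^ r_m) * supK K (fun z => ‖p.eval z‖) :=
    le_trans (supK_eval_le hK hb Q)
      (div_bound hMarkov hK hne hcm hn (le_of_eq (pZ_natDegree n v)) hroot)
  have hevalb : p.eval b = (b - v j) * Q.eval b := by
    rw [← hPQ]; simp
  have h1 : θ * supK K (fun z => ‖p.eval z‖) ≤
      ‖b - v j‖ * (2 * (c_m * (n : ℝ) ^ r_m) *
        supK K (fun z => ‖p.eval z‖)) := by
    calc θ * supK K (fun z => ‖p.eval z‖) ≤ ‖p.eval b‖ := hθ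
      _ = ‖b - v j‖ * ‖Q.eval b‖ := by rw [hevalb, norm_mul]
      _ ≤ _ := by
          apply mul_le_mul_of_nonneg_left hQb (norm_nonneg _)
  have := (mul_le_mul_iff_left₀ hM).mp (by linarith [h1] :
    θ * supK K (fun z => ‖p.eval z‖) ≤
      (‖b - v j‖ * (2 * (c_m * (n : ℝ) ^ r_m))) *
        supK K (fun z => ‖p.eval z‖))
  linarith


end Markov
variable {Ω : Type*} [MeasurableSpace Ω]

def XV (Z : ℕ → Ω → ℂ) (n : ℕ) (ω : Ω) : Fin n → ℂ := fun j => Z j ω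

lemma meas_XV (Z : ℕ → Ω → ℂ) (hZ : ∀ k, Measurable (Z k)) (n : ℕ) : Measurable (XV Z n) :=
  measurable_pi_lambda _ fun j => hZ j

lemma eA_XV (Z : ℕ → Ω → ℂ) (n : ℕ) (ω : Ω) (w : ℂ) :
    ‖∏ j ∈ Finset.range n, (w - Z j ω)‖ = eA n (XV Z n ω) w := by
  rw [eA_eq_prod, ← Fin.prod_univ_eq_prod_range]; rfl

noncomputable def NN (σ : Measure ℂ) (Z : ℕ → Ω → ℂ) (n : ℕ)
    (S : Set ((Fin n → ℂ) × ℂ)) (ω : Ω) : ℝ≥0∞ :=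
  ∫⁻ w in {w | (XV Z n ω, w) ∈ S}, ENNReal.ofReal (eA n (XV Z n ω) w) ∂σ

noncomputable def GG (σ : Measure ℂ) (Z : ℕ → Ω → ℂ) (n : ℕ)
    (S : Set ((Fin n → ℂ) × ℂ)) (ω : Ω) : ℝ≥0∞ :=
  NN σ Z n S ω / ENNReal.ofReal (II σ n (XV Z n ω))

variable (σ : Measure ℂ) [IsFiniteMeasure σ] (n : ℕ)

lemma meas_II : Measurable (fun v : Fin n → ℂ => II σ n v) :=
  (MeasureTheory.StronglyMeasurable.integral_prod_right'
    (eA_cont n).stronglyMeasurable).measurable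

lemma meas_setIntegral (B : Set ℂ) :
    Measurable (fun v : Fin n → ℂ => ∫ w in B, eA n v w ∂σ) :=
  (MeasureTheory.StronglyMeasurable.integral_prod_right' (ν := σ.restrict B)
    (eA_cont n).stronglyMeasurable).measurable

lemma meas_NV {S : Set ((Fin n → ℂ) × ℂ)} (hS : MeasurableSet S) :
    Measurable (fun v : Fin n → ℂ =>
      ∫⁻ w in {w | (v, w) ∈ S}, ENNReal.ofReal (eA n v w) ∂σ) := by
  have h1 : ∀ v : Fin n → ℂ, ∫⁻ w in {w | (v, w) ∈ S}, ENNReal.ofReal (eA n v w) ∂σ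
      = ∫⁻ w, S.indicator (fun p => ENNReal.ofReal (eA n p.1 p.2)) (v, w) ∂σ := by
    intro v
    have hms : MeasurableSet {w : ℂ | (v, w) ∈ S} := measurable_prodMk_left hS
    rw [← lintegral_indicator hms]
    congr 1
  simp_rw [h1]
  exact Measurable.lintegral_prod_right'
    (((eA_cont n).measurable.ennreal_ofReal).indicator hS)

variable (Z : ℕ → Ω → ℂ)

lemma meas_NN (hZ : ∀ k, Measurable (Z k)) {S : Set ((Fin n → ℂ) × ℂ)}
    (hS : MeasurableSet S) : Measurable (NN σ Z n S) :=
  (meas_NV σ n hS).comp (meas_XV Z hZ n)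

lemma meas_GG (hZ : ∀ k, Measurable (Z k)) {S : Set ((Fin n → ℂ) × ℂ)}
    (hS : MeasurableSet S) : Measurable (GG σ Z n S) :=
  (meas_NN σ n Z hZ hS).div
    (ENNReal.measurable_ofReal.comp ((meas_II σ n).comp (meas_XV Z hZ n)))



variable (ℙ : Measure Ω) [IsProbabilityMeasure ℙ]

lemma NV_univ (hInt : ∀ v : Fin n → ℂ, Integrable (fun w => eA n v w) σ) (v : Fin n → ℂ) :
    ∫⁻ w in {w : ℂ | (v, w) ∈ (Set.univ : Set ((Fin n → ℂ) × ℂ))}, ENNReal.ofReal (eA n v w) ∂σ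
      = ENNReal.ofReal (II σ n v) := by
  have h1 : {w : ℂ | (v, w) ∈ (Set.univ : Set ((Fin n → ℂ) × ℂ))} = Set.univ := by
    ext w; simp
  rw [h1, Measure.restrict_univ,
    ← ofReal_integral_eq_lintegral_ofReal (hInt v) (Filter.Eventually.of_forall (eA_nonneg n v))]
  rfl

lemma key (hZ : ∀ k, Measurable (Z k)) (hn : 1 ≤ n)
    (hIpos : ∀ v : Fin n → ℂ, 0 < II σ n v)
    (hInt : ∀ v : Fin n → ℂ, Integrable (fun w => eA n v w) σ)
    (hcond : ∀ g : ℂ → ℝ, Measurable g → (∀ z, |g z| ≤ 1) →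
      ℙ[(fun ω => g (Z n ω)) |
          MeasurableSpace.comap (fun ω (j : Fin n) => Z j ω)
            (inferInstance : MeasurableSpace (Fin n → ℂ))]
        =ᵐ[ℙ] fun ω =>
          (∫ w, g w * ‖∏ j ∈ Finset.range n, (w - Z j ω)‖ ∂σ) /
            ∫ w, ‖∏ j ∈ Finset.range n, (w - Z j ω)‖ ∂σ) :
    ∀ S : Set ((Fin n → ℂ) × ℂ), MeasurableSet S →
      ℙ {ω | (XV Z n ω, Z n ω) ∈ S} = ∫⁻ ω, GG σ Z n S ω ∂ℙ := by
  have hXmeas : Measurable (XV Z n) := meas_XV Z hZ n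
  have hTmeas : Measurable (fun ω => (XV Z n ω, Z n ω)) := hXmeas.prodMk (hZ n)
  have hD0 : ∀ ω, ENNReal.ofReal (II σ n (XV Z n ω)) ≠ 0 :=
    fun ω => (ENNReal.ofReal_pos.mpr (hIpos _)).ne'
  have hDt : ∀ ω : Ω, ENNReal.ofReal (II σ n (XV Z n ω)) ≠ ⊤ := fun ω => ENNReal.ofReal_ne_top
  have hIInt : ∀ ω, II σ n (XV Z n ω) = ∫ w, ‖∏ j ∈ Finset.range n, (w - Z j ω)‖ ∂σ := by
    intro ω
    simp_rw [eA_XV Z n ω]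
    rfl
  -- GG is bounded by 1 and sums with the complement to 1 pointwise
  have hsum : ∀ (t : Set ((Fin n → ℂ) × ℂ)), MeasurableSet t → ∀ ω,
      GG σ Z n t ω + GG σ Z n tᶜ ω = 1 := by
    intro t ht ω
    have hslice : {w : ℂ | (XV Z n ω, w) ∈ tᶜ} = {w : ℂ | (XV Z n ω, w) ∈ t}ᶜ := rfl
    have hms : MeasurableSet {w : ℂ | (XV Z n ω, w) ∈ t} := measurable_prodMk_left ht
    rw [GG, GG, ENNReal.div_add_div_same, NN, NN, hslice,
      lintegral_add_compl _ hms]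
    have := NV_univ σ n hInt (XV Z n ω)
    have h2 : ∫⁻ w, ENNReal.ofReal (eA n (XV Z n ω) w) ∂σ
        = ENNReal.ofReal (II σ n (XV Z n ω)) := by
      rw [← Measure.restrict_univ (μ := σ)]
      simpa using this
    rw [h2, ENNReal.div_self (hD0 ω) (hDt ω)]
  have hle1 : ∀ (t : Set ((Fin n → ℂ) × ℂ)), MeasurableSet t → ∀ ω, GG σ Z n t ω ≤ 1 := by
    intro t ht ω
    rw [← hsum t ht ω]
    exact le_self_add
  refine MeasurableSpace.induction_on_inter
    (C := fun S _ => ℙ {ω | (XV Z n ω, Z n ω) ∈ S} = ∫⁻ ω, GG σ Z n S ω ∂ℙ)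
    (generateFrom_prod (α := Fin n → ℂ) (β := ℂ)).symm isPiSystem_prod ?_ ?_ ?_ ?_
  · -- empty
    have h1 : {ω : Ω | (XV Z n ω, Z n ω) ∈ (∅ : Set ((Fin n → ℂ) × ℂ))} = ∅ := by
      ext ω; simp
    have h2 : ∀ ω, GG σ Z n (∅ : Set ((Fin n → ℂ) × ℂ)) ω = 0 := by
      intro ω
      have : {w : ℂ | (XV Z n ω, w) ∈ (∅ : Set ((Fin n → ℂ) × ℂ))} = ∅ := by ext w; simp
      rw [GG, NN, this]
      simp
    simp_rw [h1, h2]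
    simp
  · -- basic
    intro S hSmem
    obtain ⟨A, hA, B, hB, rfl⟩ := hSmem
    replace hA : MeasurableSet A := hA
    replace hB : MeasurableSet B := hB
    set g : ℂ → ℝ := B.indicator fun _ => 1 with hgdef
    have hg : Measurable g := measurable_const.indicator hB
    have hgb : ∀ z, |g z| ≤ 1 := by
      intro z
      rw [hgdef]
      by_cases hz : z ∈ B <;> simp [Set.indicator_apply, hz]
    have hm : MeasurableSpace.comap (fun ω (j : Fin n) => Z j ω)
        (inferInstance : MeasurableSpace (Fin n → ℂ)) ≤ _ := hXmeas.comap_le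
    haveI : SigmaFinite (ℙ.trim hm) := by
      have : IsFiniteMeasure (ℙ.trim hm) := isFiniteMeasure_trim hm
      infer_instance
    have hgint : Integrable (fun ω => g (Z n ω)) ℙ := by
      refine Integrable.mono' (integrable_const (1:ℝ))
        ((hg.comp (hZ n)).aestronglyMeasurable) ?_
      filter_upwards with ω
      rw [Real.norm_eq_abs]
      exact hgb _
    have hpre : MeasurableSet[MeasurableSpace.comap (fun ω (j : Fin n) => Z j ω)
        (inferInstance : MeasurableSpace (Fin n → ℂ))] (XV Z n ⁻¹' A) := ⟨A, hA, rfl⟩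
    have hpre0 : MeasurableSet (XV Z n ⁻¹' A) := hXmeas hA
    have hpreB : MeasurableSet (Z n ⁻¹' B) := (hZ n) hB
    have hseteq : {ω | (XV Z n ω, Z n ω) ∈ A ×ˢ B} = (XV Z n ⁻¹' A) ∩ (Z n ⁻¹' B) := by
      ext ω; simp [Set.mem_prod]
    -- the ratio function
    set RR : Ω → ℝ := fun ω => (∫ w in B, eA n (XV Z n ω) w ∂σ) / II σ n (XV Z n ω) with hRRdef
    have hRRmeas : Measurable RR :=
      ((meas_setIntegral σ n B).comp hXmeas).div ((meas_II σ n).comp hXmeas)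
    have hRRnonneg : ∀ ω, 0 ≤ RR ω := by
      intro ω
      exact div_nonneg (integral_nonneg (fun w => eA_nonneg n _ w)) (hIpos _).le
    have hRRle1 : ∀ ω, RR ω ≤ 1 := by
      intro ω
      rw [hRRdef, div_le_one (hIpos _)]
      exact setIntegral_le_integral (hInt _) (Filter.Eventually.of_forall (eA_nonneg n _))
    -- step 1 : the set integral of g ∘ Z n over the preimage of A
    have e1 : ∫ ω in XV Z n ⁻¹' A, g (Z n ω) ∂ℙ
        = (ℙ ((XV Z n ⁻¹' A) ∩ (Z n ⁻¹' B))).toReal := by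
      have h1 : ∀ ω, g (Z n ω) = (Z n ⁻¹' B).indicator (fun _ => (1:ℝ)) ω := by
        intro ω
        by_cases hz : Z n ω ∈ B <;> simp [hgdef, Set.indicator_apply, hz]
      simp_rw [h1]
      rw [setIntegral_indicator hpreB]
      simp; rfl
    -- step 2 : condexp
    have e2 := setIntegral_condExp hm hgint hpre (μ := ℙ)
    -- step 3 : a.e. identification of the condexp with RR
    have e3 : ∫ ω in XV Z n ⁻¹' A,
        (ℙ[(fun ω => g (Z n ω)) | MeasurableSpace.comap (fun ω (j : Fin n) => Z j ω)
          (inferInstance : MeasurableSpace (Fin n → ℂ))]) ω ∂ℙ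
        = ∫ ω in XV Z n ⁻¹' A, RR ω ∂ℙ := by
      apply setIntegral_congr_ae hpre0
      filter_upwards [hcond g hg hgb] with ω hω _
      rw [hω]
      have h1 : ∀ w, g w * ‖∏ j ∈ Finset.range n, (w - Z j ω)‖
          = B.indicator (fun w => eA n (XV Z n ω) w) w := by
        intro w
        rw [eA_XV Z n ω w] at *
        by_cases hw : w ∈ B <;> simp [hgdef, Set.indicator_apply, hw]
      simp_rw [h1]
      rw [integral_indicator hB, ← hIInt ω]
    have e4 : (ℙ ((XV Z n ⁻¹' A) ∩ (Z n ⁻¹' B))).toReal = ∫ ω in XV Z n ⁻¹' A, RR ω ∂ℙ := by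
      rw [← e1, ← e3, e2]
    -- identification of GG with the indicator of RR
    have hRid : ∀ ω, GG σ Z n (A ×ˢ B) ω
        = ENNReal.ofReal ((XV Z n ⁻¹' A).indicator RR ω) := by
      intro ω
      by_cases hωA : XV Z n ω ∈ A
      · have hslice : {w : ℂ | (XV Z n ω, w) ∈ A ×ˢ B} = B := by
          ext w; simp [Set.mem_prod, hωA]
        rw [GG, NN, hslice, Set.indicator_of_mem (show ω ∈ XV Z n ⁻¹' A from hωA), hRRdef,
          ENNReal.ofReal_div_of_pos (hIpos _),
          ← ofReal_integral_eq_lintegral_ofReal ((hInt _).restrict)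
            (Filter.Eventually.of_forall (eA_nonneg n _))]
      · have hslice : {w : ℂ | (XV Z n ω, w) ∈ A ×ˢ B} = ∅ := by
          ext w; simp [Set.mem_prod, hωA]
        rw [GG, NN, hslice, Set.indicator_of_notMem (show ω ∉ XV Z n ⁻¹' A from hωA)]
        simp
    have hindint : Integrable ((XV Z n ⁻¹' A).indicator RR) ℙ := by
      refine Integrable.mono' (integrable_const (1:ℝ))
        ((hRRmeas.indicator hpre0).aestronglyMeasurable) ?_
      filter_upwards with ω
      rw [Real.norm_eq_abs]
      by_cases hω : ω ∈ XV Z n ⁻¹' A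
      · rw [Set.indicator_of_mem hω, abs_of_nonneg (hRRnonneg ω)]; exact hRRle1 ω
      · rw [Set.indicator_of_notMem hω]; simp
    have e5 : ∫⁻ ω, GG σ Z n (A ×ˢ B) ω ∂ℙ
        = ENNReal.ofReal (∫ ω, (XV Z n ⁻¹' A).indicator RR ω ∂ℙ) := by
      simp_rw [hRid]
      rw [← ofReal_integral_eq_lintegral_ofReal hindint]
      filter_upwards with ω
      by_cases hω : ω ∈ XV Z n ⁻¹' A
      · rw [Set.indicator_of_mem hω]; exact hRRnonneg ω
      · simp [Set.indicator_of_notMem hω]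
    rw [hseteq, e5, integral_indicator hpre0, ← e4,
      ENNReal.ofReal_toReal (measure_ne_top ℙ _)]
  · -- compl
    intro t ht iht
    have hGt : Measurable (GG σ Z n t) := meas_GG σ n Z hZ ht
    have hGle : ∫⁻ ω, GG σ Z n t ω ∂ℙ ≤ 1 := by
      calc ∫⁻ ω, GG σ Z n t ω ∂ℙ ≤ ∫⁻ _, 1 ∂ℙ := lintegral_mono (hle1 t ht)
        _ = 1 := by simp
    have h1 : ∀ ω, GG σ Z n tᶜ ω = 1 - GG σ Z n t ω := by
      intro ω
      exact ENNReal.eq_sub_of_add_eq (by exact (lt_of_le_of_lt (hle1 t ht ω) ENNReal.one_lt_top).ne)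
        (by rw [add_comm]; exact hsum t ht ω)
    have hLHS : {ω | (XV Z n ω, Z n ω) ∈ tᶜ} = {ω | (XV Z n ω, Z n ω) ∈ t}ᶜ := rfl
    have hms : MeasurableSet {ω | (XV Z n ω, Z n ω) ∈ t} := hTmeas ht
    rw [hLHS, measure_compl hms (measure_ne_top ℙ _), iht]
    simp_rw [h1]
    rw [lintegral_sub hGt (lt_of_le_of_lt hGle ENNReal.one_lt_top).ne
      (Filter.Eventually.of_forall (hle1 t ht))]
    simp [measure_univ]
  · -- union
    intro f hdisj hmeas ihf
    have hLHS : {ω | (XV Z n ω, Z n ω) ∈ ⋃ i, f i} = ⋃ i, {ω | (XV Z n ω, Z n ω) ∈ f i} := by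
      ext ω; simp
    have hdisjΩ : Pairwise (Function.onFun Disjoint fun i => {ω | (XV Z n ω, Z n ω) ∈ f i}) := by
      intro i j hij
      exact Set.disjoint_left.mpr fun ω hi hj =>
        Set.disjoint_left.mp (hdisj hij) hi hj
    have hGU : ∀ ω, GG σ Z n (⋃ i, f i) ω = ∑' i, GG σ Z n (f i) ω := by
      intro ω
      have hslice : {w : ℂ | (XV Z n ω, w) ∈ ⋃ i, f i} = ⋃ i, {w : ℂ | (XV Z n ω, w) ∈ f i} := by
        ext w; simp
      have hdisjW : Pairwise (Function.onFun Disjoint fun i => {w : ℂ | (XV Z n ω, w) ∈ f i}) := by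
        intro i j hij
        exact Set.disjoint_left.mpr fun w hi hj =>
          Set.disjoint_left.mp (hdisj hij) hi hj
      have hmW : ∀ i, MeasurableSet {w : ℂ | (XV Z n ω, w) ∈ f i} :=
        fun i => measurable_prodMk_left (hmeas i)
      rw [GG, NN, hslice, lintegral_iUnion hmW hdisjW]
      rw [ENNReal.div_eq_inv_mul, ← ENNReal.tsum_mul_left]
      congr 1
      ext i
      rw [GG, NN, ENNReal.div_eq_inv_mul]
    have hmsi : ∀ i, MeasurableSet {ω | (XV Z n ω, Z n ω) ∈ f i} := fun i => hTmeas (hmeas i)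
    rw [hLHS, measure_iUnion hdisjΩ hmsi]
    simp_rw [hGU]
    rw [lintegral_tsum (fun i => (meas_GG σ n Z hZ (hmeas i)).aemeasurable)]
    exact tsum_congr ihf


end Stmt5Aux

open Stmt5Aux in
theorem stmt5 {Ω : Type*} [MeasurableSpace Ω] (ℙ : Measure Ω) [IsProbabilityMeasure ℙ]
    (K : Set ℂ) (hK : IsCompact K)
    (σ : Measure ℂ) [IsFiniteMeasure σ] (hσK : σ Kᶜ = 0) (hσpos : 0 < σ K)
    (hlinf : ∀ f : ℂ → ℝ, ContinuousOn f K →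
      supK K (fun z => |f z|) = essSupK σ (fun z => |f z|))
    (c_ℓ r_ℓ : ℝ) (hcℓ : 0 < c_ℓ) (hrℓ : 0 < r_ℓ)
    (hNik : ∀ m : ℕ, 1 ≤ m → ∀ P : Polynomial ℂ, P.natDegree ≤ m →
      essSupK σ (fun z => ‖P.eval z‖) ≤
        c_ℓ * (m : ℝ) ^ r_ℓ * ∫ z, ‖P.eval z‖ ∂σ)
    (c_m r_m : ℝ) (hcm : 0 < c_m) (hrm : 0 < r_m)
    (hMarkov : ∀ m : ℕ, 1 ≤ m → ∀ P : Polynomial ℂ, P.natDegree ≤ m →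
      supK K (fun z => ‖(Polynomial.derivative P).eval z‖) ≤
        c_m * (m : ℝ) ^ r_m * supK K (fun z => ‖P.eval z‖))
    -- the random Leja points
    (Z : ℕ → Ω → ℂ) (hZmeas : ∀ n, Measurable (Z n)) (hZK : ∀ n ω, Z n ω ∈ K)
    (hpos : ∀ n : ℕ, 1 ≤ n → ∀ᵐ ω ∂ℙ,
      0 < ∫ w, ‖∏ j ∈ Finset.range n, (w - Z j ω)‖ ∂σ)
    -- conditionally on (Z_0, …, Z_{n−1}), the law of Z_n has density proportional
    -- to |π_n| with respect to σ
    (hcond : ∀ n : ℕ, 1 ≤ n → ∀ g : ℂ → ℝ, Measurable g → (∀ z, |g z| ≤ 1) →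
      ℙ[(fun ω => g (Z n ω)) |
          MeasurableSpace.comap (fun ω (j : Fin n) => Z j ω)
            (inferInstance : MeasurableSpace (Fin n → ℂ))]
        =ᵐ[ℙ] fun ω =>
          (∫ w, g w * ‖∏ j ∈ Finset.range n, (w - Z j ω)‖ ∂σ) /
            ∫ w, ‖∏ j ∈ Finset.range n, (w - Z j ω)‖ ∂σ)
    (ε : ℝ) (hε : 0 < ε) :
    ∀ᵐ ω ∂ℙ, ∃ c : ℝ, 0 < c ∧ ∀ n : ℕ, 1 ≤ n → ∀ j < n,
      c * (n : ℝ) ^ (-(1 + r_m + r_ℓ + ε)) ≤ ‖Z n ω - Z j ω‖ := by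
  classical
  -- K is nonempty
  have hne : K.Nonempty := by
    rcases Set.eq_empty_or_nonempty K with h | h
    · rw [h] at hσpos; simp at hσpos
    · exact h
  -- σ is supported on K
  have haeK : ∀ᵐ w ∂σ, w ∈ K := by
    rw [MeasureTheory.ae_iff]
    exact hσK
  -- integrability of eA
  have hInt : ∀ (n : ℕ) (v : Fin n → ℂ), Integrable (fun w => eA n v w) σ := by
    intro n v
    have hcont : Continuous (fun w => eA n v w) :=
      (eA_cont n).comp (continuous_const.prodMk continuous_id)
    obtain ⟨C, hC⟩ := (hK.image_of_continuousOn hcont.continuousOn).bddAbove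
    refine Integrable.mono' (integrable_const C) hcont.aestronglyMeasurable ?_
    filter_upwards [haeK] with w hw
    rw [Real.norm_eq_abs, abs_of_nonneg (eA_nonneg n v w)]
    exact hC ⟨w, hw, rfl⟩
  -- Nikolskii: sup norm controlled by L¹ norm
  have hMle : ∀ (n : ℕ), 1 ≤ n → ∀ v : Fin n → ℂ,
      supK K (fun z => ‖(pZ n v).eval z‖) ≤ c_ℓ * (n : ℝ) ^ r_ℓ * II σ n v := by
    intro n hn v
    have habs : (fun z => |‖(pZ n v).eval z‖|)
        = fun z => ‖(pZ n v).eval z‖ :=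
      funext fun z => abs_of_nonneg (norm_nonneg _)
    have h1 := hlinf (fun z => ‖(pZ n v).eval z‖) (contAbs _).continuousOn
    rw [habs] at h1
    have h2 := hNik n hn (pZ n v) (le_of_eq (pZ_natDegree n v))
    rw [← h1] at h2
    exact h2
  -- positivity of II
  have hnpos : ∀ n : ℕ, 1 ≤ n → (0:ℝ) < (n:ℝ) := by
    intro n hn; exact_mod_cast hn
  have hIpos : ∀ (n : ℕ), 1 ≤ n → ∀ v : Fin n → ℂ, 0 < II σ n v := by
    intro n hn v
    have h0 : 0 < supK K (fun z => ‖(pZ n v).eval z‖) :=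
      supK_pos hMarkov hK hne (pZ n v) (pZ_monic n v)
    have h1 := hMle n hn v
    have h2 : 0 < c_ℓ * (n:ℝ) ^ r_ℓ := mul_pos hcℓ (Real.rpow_pos_of_pos (hnpos n hn) _)
    nlinarith
  -- threshold sequence
  set u : ℕ → ℝ := fun n => (n:ℝ) ^ (-(1 + ε)) with hudef
  have hu0 : u 0 = 0 := by
    show ((0:ℕ):ℝ) ^ (-(1 + ε)) = 0
    rw [Nat.cast_zero]
    exact Real.zero_rpow (by linarith)
  have hunonneg : ∀ n, 0 ≤ u n := fun n => Real.rpow_nonneg (Nat.cast_nonneg n) _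
  -- bad events
  set SS : (n : ℕ) → Set ((Fin n → ℂ) × ℂ) :=
    fun n => {p : (Fin n → ℂ) × ℂ | eA n p.1 p.2 < u n * II σ n p.1} with hSSdef
  have hSSmeas : ∀ n, MeasurableSet (SS n) := by
    intro n
    exact measurableSet_lt (eA_cont n).measurable
      (measurable_const.mul ((meas_II σ n).comp measurable_fst))
  set BB : ℕ → Set Ω := fun n => {ω | (XV Z n ω, Z n ω) ∈ SS n} with hBBdef
  have hBBmeas : ∀ n, MeasurableSet (BB n) :=
    fun n => ((meas_XV Z hZmeas n).prodMk (hZmeas n)) (hSSmeas n)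
  -- BB 0 is empty
  have hBB0 : BB 0 = ∅ := by
    ext ω
    simp only [hBBdef, hSSdef, Set.mem_setOf_eq, Set.mem_empty_iff_false, iff_false]
    rw [hu0, zero_mul]
    exact not_lt.mpr (eA_nonneg _ _ _)
  -- measure bound for BB n, n ≥ 1
  have hBBle : ∀ n : ℕ, 1 ≤ n → ℙ (BB n) ≤ ENNReal.ofReal (u n) * σ Set.univ := by
    intro n hn
    rw [hBBdef]
    rw [key σ n Z ℙ hZmeas hn (hIpos n hn) (hInt n) (hcond n hn) (SS n) (hSSmeas n)]
    have hGb : ∀ ω, GG σ Z n (SS n) ω ≤ ENNReal.ofReal (u n) * σ Set.univ := by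
      intro ω
      set v := XV Z n ω
      have hsl : MeasurableSet {w : ℂ | (v, w) ∈ SS n} := measurable_prodMk_left (hSSmeas n)
      have hNb : NN σ Z n (SS n) ω ≤ ENNReal.ofReal (u n * II σ n v) * σ Set.univ := by
        rw [NN]
        calc ∫⁻ w in {w | (v, w) ∈ SS n}, ENNReal.ofReal (eA n v w) ∂σ
            ≤ ∫⁻ _ in {w | (v, w) ∈ SS n}, ENNReal.ofReal (u n * II σ n v) ∂σ := by
              refine setLIntegral_mono measurable_const ?_
              intro w hw
              exact ENNReal.ofReal_le_ofReal (le_of_lt hw)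
          _ = ENNReal.ofReal (u n * II σ n v) * σ {w | (v, w) ∈ SS n} := by
              rw [setLIntegral_const]
          _ ≤ _ := mul_le_mul_right (measure_mono (Set.subset_univ _)) _
      rw [GG]
      calc NN σ Z n (SS n) ω / ENNReal.ofReal (II σ n v)
          ≤ (ENNReal.ofReal (u n * II σ n v) * σ Set.univ) / ENNReal.ofReal (II σ n v) :=
            ENNReal.div_le_div_right hNb _
        _ = ENNReal.ofReal (u n) * σ Set.univ := by
            rw [ENNReal.ofReal_mul (hunonneg n)]
            rw [mul_right_comm, mul_div_assoc,
              ENNReal.div_self (ENNReal.ofReal_pos.mpr (hIpos n hn v)).ne' ENNReal.ofReal_ne_top,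
              mul_one]
    calc ∫⁻ ω, GG σ Z n (SS n) ω ∂ℙ ≤ ∫⁻ _, ENNReal.ofReal (u n) * σ Set.univ ∂ℙ :=
        lintegral_mono hGb
      _ = ENNReal.ofReal (u n) * σ Set.univ := by
          rw [lintegral_const, measure_univ (μ := ℙ), mul_one]
  -- summability
  have hsummable : Summable u := by
    have : ∀ n : ℕ, u n = ((n:ℝ) ^ (1 + ε))⁻¹ := fun n =>
      Real.rpow_neg (Nat.cast_nonneg n) _
    rw [funext this]
    exact Real.summable_nat_rpow_inv.mpr (by linarith)
  have htsum_ne : (∑' n, ℙ (BB n)) ≠ ⊤ := by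
    have h1 : (∑' n, ℙ (BB n)) ≤ ∑' n, ENNReal.ofReal (u n) * σ Set.univ := by
      refine ENNReal.tsum_le_tsum ?_
      intro n
      rcases Nat.eq_zero_or_pos n with h | h
      · rw [h, hBB0]; simp
      · exact hBBle n h
    have h2 : (∑' n, ENNReal.ofReal (u n) * σ Set.univ)
        = ENNReal.ofReal (∑' n, u n) * σ Set.univ := by
      rw [ENNReal.tsum_mul_right, ENNReal.ofReal_tsum_of_nonneg hunonneg hsummable]
    exact ne_top_of_le_ne_top
      (ENNReal.mul_ne_top ENNReal.ofReal_ne_top (measure_ne_top σ _)) (h1.trans h2.le)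
  -- Borel-Cantelli
  have hBC : ∀ᵐ ω ∂ℙ, ∀ᶠ n in Filter.atTop, ω ∉ BB n :=
    MeasureTheory.ae_eventually_notMem htsum_ne
  -- distinctness
  have hdist : ∀ᵐ ω ∂ℙ, ∀ n : ℕ, 1 ≤ n → eA n (XV Z n ω) (Z n ω) ≠ 0 := by
    rw [MeasureTheory.ae_all_iff]
    intro n
    by_cases hn : 1 ≤ n
    · have hSD : MeasurableSet {p : (Fin n → ℂ) × ℂ | eA n p.1 p.2 = 0} :=
        (eA_cont n).measurable (measurableSet_singleton 0)
      have h0 : ℙ {ω | (XV Z n ω, Z n ω) ∈ {p : (Fin n → ℂ) × ℂ | eA n p.1 p.2 = 0}} = 0 := by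
        rw [key σ n Z ℙ hZmeas hn (hIpos n hn) (hInt n) (hcond n hn) _ hSD]
        have : ∀ ω, GG σ Z n {p : (Fin n → ℂ) × ℂ | eA n p.1 p.2 = 0} ω = 0 := by
          intro ω
          set v := XV Z n ω
          have hsl : MeasurableSet {w : ℂ | (v, w) ∈ {p : (Fin n → ℂ) × ℂ | eA n p.1 p.2 = 0}} :=
            measurable_prodMk_left hSD
          have hN0 : NN σ Z n {p : (Fin n → ℂ) × ℂ | eA n p.1 p.2 = 0} ω = 0 := by
            rw [NN]
            have hz : ∀ w ∈ {w : ℂ | (v, w) ∈ {p : (Fin n → ℂ) × ℂ | eA n p.1 p.2 = 0}},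
                ENNReal.ofReal (eA n v w) = (fun _ => (0:ℝ≥0∞)) w := by
              intro w hw
              have h : eA n v w = 0 := hw
              simp [h]
            rw [setLIntegral_congr_fun hsl hz]
            simp
          rw [GG, hN0, ENNReal.zero_div]
        simp_rw [this]
        simp
      have h1 : ∀ᵐ ω ∂ℙ,
          ω ∉ {ω | (XV Z n ω, Z n ω) ∈ {p : (Fin n → ℂ) × ℂ | eA n p.1 p.2 = 0}} :=
        measure_eq_zero_iff_ae_notMem.mp h0
      filter_upwards [h1] with ω hω _
      exact fun hcontra => hω hcontra
    · filter_upwards with ω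
      intro h; exact absurd h hn
  -- main a.s. argument
  filter_upwards [hBC, hdist] with ω hev hd
  obtain ⟨N, hN⟩ := Filter.eventually_atTop.mp hev
  set α : ℝ := 1 + r_m + r_ℓ + ε with hαdef
  have hαpos : 0 < α := by rw [hαdef]; linarith
  set c₀ : ℝ := (2 * c_ℓ * c_m)⁻¹ with hc₀def
  have hc₀pos : 0 < c₀ := by rw [hc₀def]; positivity
  have hlarge : ∀ n : ℕ, 1 ≤ n → N ≤ n → ∀ j, (hj : j < n) →
      c₀ * (n:ℝ) ^ (-α) ≤ ‖Z n ω - Z j ω‖ := by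
    intro n hn hNn j hj
    have hnB := hN n hNn
    have hnposR : (0:ℝ) < (n:ℝ) := hnpos n hn
    have hge : u n * II σ n (XV Z n ω) ≤ eA n (XV Z n ω) (Z n ω) := by
      by_contra h
      push_neg at h
      exact hnB h
    set M := supK K (fun z => ‖(pZ n (XV Z n ω)).eval z‖) with hMdef
    have hMpos : 0 < M := supK_pos hMarkov hK hne _ (pZ_monic _ _)
    have hcl : 0 < c_ℓ * (n:ℝ) ^ r_ℓ := mul_pos hcℓ (Real.rpow_pos_of_pos hnposR _)
    set θ : ℝ := u n / (c_ℓ * (n:ℝ) ^ r_ℓ) with hθdef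
    have hθM : θ * M ≤ ‖(pZ n (XV Z n ω)).eval (Z n ω)‖ := by
      have h1 : M ≤ c_ℓ * (n:ℝ) ^ r_ℓ * II σ n (XV Z n ω) := hMle n hn _
      have h2 : θ * M ≤ θ * (c_ℓ * (n:ℝ) ^ r_ℓ * II σ n (XV Z n ω)) :=
        mul_le_mul_of_nonneg_left h1 (div_nonneg (hunonneg n) hcl.le)
      have h3 : θ * (c_ℓ * (n:ℝ) ^ r_ℓ * II σ n (XV Z n ω)) = u n * II σ n (XV Z n ω) := by
        rw [hθdef]; field_simp
      have h4 : eA n (XV Z n ω) (Z n ω) = ‖(pZ n (XV Z n ω)).eval (Z n ω)‖ := rfl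
      rw [← h4]
      linarith
    have hsep := separation hMarkov hK hne hcm hn (XV Z n ω) (hZK n ω) hθM ⟨j, hj⟩
    have hvj : XV Z n ω ⟨j, hj⟩ = Z j ω := rfl
    rw [hvj] at hsep
    set d := ‖Z n ω - Z j ω‖ with hddef
    have hrm2 : 0 < (n:ℝ) ^ r_m := Real.rpow_pos_of_pos hnposR _
    have hrl2 : 0 < (n:ℝ) ^ r_ℓ := Real.rpow_pos_of_pos hnposR _
    have hprod : (n:ℝ) ^ (-α) * ((n:ℝ) ^ r_m * (n:ℝ) ^ r_ℓ) = u n := by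
      show _ = (n:ℝ) ^ (-(1 + ε))
      rw [← Real.rpow_add hnposR, ← Real.rpow_add hnposR]
      congr 1
      rw [hαdef]; ring
    have h1 : u n ≤ 2 * (c_m * (n:ℝ) ^ r_m) * d * (c_ℓ * (n:ℝ) ^ r_ℓ) := by
      rw [hθdef] at hsep
      calc u n = u n / (c_ℓ * (n:ℝ) ^ r_ℓ) * (c_ℓ * (n:ℝ) ^ r_ℓ) := by field_simp
        _ ≤ 2 * (c_m * (n:ℝ) ^ r_m) * d * (c_ℓ * (n:ℝ) ^ r_ℓ) :=
          mul_le_mul_of_nonneg_right hsep hcl.le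
    have h2 : (n:ℝ) ^ (-α) * ((n:ℝ) ^ r_m * (n:ℝ) ^ r_ℓ)
        ≤ (2 * c_ℓ * c_m * d) * ((n:ℝ) ^ r_m * (n:ℝ) ^ r_ℓ) := by
      rw [hprod]
      calc u n ≤ 2 * (c_m * (n:ℝ) ^ r_m) * d * (c_ℓ * (n:ℝ) ^ r_ℓ) := h1
        _ = (2 * c_ℓ * c_m * d) * ((n:ℝ) ^ r_m * (n:ℝ) ^ r_ℓ) := by ring
    have h3 : (n:ℝ) ^ (-α) ≤ 2 * c_ℓ * c_m * d :=
      le_of_mul_le_mul_right (by linarith) (mul_pos hrm2 hrl2)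
    calc c₀ * (n:ℝ) ^ (-α) ≤ c₀ * (2 * c_ℓ * c_m * d) :=
        mul_le_mul_of_nonneg_left h3 hc₀pos.le
      _ = d := by rw [hc₀def]; field_simp
  -- positivity of all the pairwise distances
  have hdpos : ∀ n : ℕ, 1 ≤ n → ∀ j, (hj : j < n) → 0 < ‖Z n ω - Z j ω‖ := by
    intro n hn j hj
    have h1 := hd n hn
    rw [eA_eq_prod] at h1
    have h2 : (∏ k : Fin n, (Z n ω - XV Z n ω k)) ≠ 0 := fun h => h1 (by rw [h]; simp)
    have h3 : Z n ω - Z j ω ≠ 0 := by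
      intro h
      exact h2 (Finset.prod_eq_zero (Finset.mem_univ (⟨j, hj⟩ : Fin n)) h)
    exact norm_pos_iff.mpr h3
  set N' := max N 1 with hN'def
  set pairs : Finset (ℕ × ℕ) := (Finset.range N' ×ˢ Finset.range N').filter
    (fun p => p.2 < p.1) with hpairsdef
  have hmem_pairs : ∀ n j : ℕ, n < N' → j < n → (n, j) ∈ pairs := by
    intro n j h1 h2
    rw [hpairsdef, Finset.mem_filter, Finset.mem_product]
    exact ⟨⟨Finset.mem_range.mpr h1, Finset.mem_range.mpr (lt_trans h2 h1)⟩, h2⟩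
  have hrpow_le_one : ∀ n : ℕ, 1 ≤ n → (n:ℝ) ^ (-α) ≤ 1 := by
    intro n hn
    exact Real.rpow_le_one_of_one_le_of_nonpos (by exact_mod_cast hn) (by linarith)
  by_cases hP : pairs.Nonempty
  · set m := pairs.inf' hP (fun p => ‖Z p.1 ω - Z p.2 ω‖) with hmdef
    have hmpos : 0 < m := by
      rw [hmdef, Finset.lt_inf'_iff]
      intro p hp
      rw [hpairsdef, Finset.mem_filter, Finset.mem_product] at hp
      exact hdpos p.1 (Nat.one_le_iff_ne_zero.mpr (by omega)) p.2 hp.2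
    refine ⟨min c₀ m, lt_min hc₀pos hmpos, ?_⟩
    intro n hn j hj
    rcases lt_or_ge n N' with hsmall | hbig
    · have h2 : m ≤ ‖Z n ω - Z j ω‖ :=
        Finset.inf'_le _ (hmem_pairs n j hsmall hj)
      calc min c₀ m * (n:ℝ) ^ (-α) ≤ min c₀ m * 1 :=
          mul_le_mul_of_nonneg_left (hrpow_le_one n hn) (lt_min hc₀pos hmpos).le
        _ = min c₀ m := mul_one _
        _ ≤ m := min_le_right _ _
        _ ≤ _ := h2
    · have h5 := hlarge n hn (le_trans (le_max_left N 1) hbig) j hj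
      calc min c₀ m * (n:ℝ) ^ (-α) ≤ c₀ * (n:ℝ) ^ (-α) :=
          mul_le_mul_of_nonneg_right (min_le_left _ _) (Real.rpow_nonneg (Nat.cast_nonneg n) _)
        _ ≤ _ := h5
  · refine ⟨c₀, hc₀pos, ?_⟩
    intro n hn j hj
    rcases lt_or_ge n N' with hsmall | hbig
    · exact absurd ⟨(n, j), hmem_pairs n j hsmall hj⟩ hP
    · exact hlarge n hn (le_trans (le_max_left N 1) hbig) j hj
end

section
/- Let K ⊂ ℂ be compact, P ∈ ℂ[X] a polynomial of degree at most n with ‖P‖_K > 0, where K satisfies the Markov inequality with constants c_m > 0 and r_m > 0. Let U and V be K-valued random variables defined on a common probability space and let τ > 0. Then ℙ( | |P(U)| − |P(V)| | > τ ‖P‖_K ) ≤ (c_m n^{r_m} / ln(1 + τ)) · 𝔼[ |U − V| ]. -/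
open MeasureTheory

theorem stmt7 {Ω : Type*} [MeasurableSpace Ω] (ℙ : Measure Ω) [IsProbabilityMeasure ℙ]
    (K : Set ℂ) (hK : IsCompact K) (c_m r_m : ℝ) (hcm : 0 < c_m) (hrm : 0 < r_m)
    (hMarkov : ∀ m : ℕ, 1 ≤ m → ∀ Q : Polynomial ℂ, Q.natDegree ≤ m →
      supK K (fun z => ‖(Polynomial.derivative Q).eval z‖) ≤
        c_m * (m : ℝ) ^ r_m * supK K (fun z => ‖Q.eval z‖))
    (n : ℕ) (hn : 1 ≤ n) (P : Polynomial ℂ) (hP : P.natDegree ≤ n)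
    (hPpos : 0 < supK K (fun z => ‖P.eval z‖))
    (U V : Ω → ℂ) (hUmeas : Measurable U) (hVmeas : Measurable V)
    (hUK : ∀ ω, U ω ∈ K) (hVK : ∀ ω, V ω ∈ K)
    (τ : ℝ) (hτ : 0 < τ) :
    (ℙ {ω | τ * supK K (fun z => ‖P.eval z‖) <
        |‖P.eval (U ω)‖ - ‖P.eval (V ω)‖|}).toReal ≤
      c_m * (n : ℝ) ^ r_m / Real.log (1 + τ) * ∫ ω, ‖U ω - V ω‖ ∂ℙ := by
  classical
  set S := supK K (fun z => ‖P.eval z‖) with hSdef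
  set M := c_m * (n : ℝ) ^ r_m with hMdef
  have hnpos : (0 : ℝ) < (n : ℝ) := by exact_mod_cast hn
  have hMpos : 0 < M := mul_pos hcm (Real.rpow_pos_of_pos hnpos _)
  -- pointwise bound by supK
  have hle : ∀ Q : Polynomial ℂ, ∀ z ∈ K,
      ‖Q.eval z‖ ≤ supK K (fun z => ‖Q.eval z‖) := by
    intro Q z hz
    have hcont : ContinuousOn (fun z => ‖Q.eval z‖) K :=
      (continuous_norm.comp Q.continuous).continuousOn
    exact le_csSup (hK.bddAbove_image hcont) (Set.mem_image_of_mem _ hz)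
  -- degrees of iterated derivatives
  have hdeg : ∀ k : ℕ, ((Polynomial.derivative)^[k] P).natDegree ≤ n := by
    intro k
    induction k with
    | zero => simpa using hP
    | succ k ih =>
      rw [Function.iterate_succ_apply']
      exact le_trans ((Polynomial.natDegree_derivative_le _).trans (Nat.sub_le _ _)) ih
  -- iterated Markov bound
  have hiter : ∀ k : ℕ,
      supK K (fun z => ‖((Polynomial.derivative)^[k] P).eval z‖) ≤ M ^ k * S := by
    intro k
    induction k with
    | zero => simp [hSdef, supK]
    | succ k ih =>
      have h1 : supK K (fun z => ‖((Polynomial.derivative)^[k + 1] P).eval z‖) =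
          supK K (fun z =>
            ‖(Polynomial.derivative ((Polynomial.derivative)^[k] P)).eval z‖) := by
        simp only [Function.iterate_succ_apply']
      rw [h1]
      calc supK K (fun z =>
              ‖(Polynomial.derivative ((Polynomial.derivative)^[k] P)).eval z‖)
          ≤ M * supK K (fun z => ‖((Polynomial.derivative)^[k] P).eval z‖) :=
            hMarkov n hn _ (hdeg k)
        _ ≤ M * (M ^ k * S) := mul_le_mul_of_nonneg_left ih hMpos.le
        _ = M ^ (k + 1) * S := by ring
  have hSpos : 0 < S := hPpos
  -- key deterministic estimate
  have hkey : ∀ z ∈ K, ∀ w ∈ K,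
      ‖P.eval z - P.eval w‖ ≤
        S * (Real.exp (M * ‖z - w‖) - 1) := by
    intro z hz w hw
    set d := ‖z - w‖ with hd
    have hdnn : 0 ≤ d := norm_nonneg _
    have hdeg' : (Polynomial.taylor w P).natDegree < n + 1 := by
      rw [Polynomial.natDegree_taylor]; omega
    have hT : P.eval z = ∑ i ∈ Finset.range (n + 1),
        (Polynomial.taylor w P).coeff i * (z - w) ^ i := by
      rw [← Polynomial.taylor_eval_sub w P z, Polynomial.eval_eq_sum_range' hdeg']
    have hT0 : (Polynomial.taylor w P).coeff 0 = P.eval w := Polynomial.taylor_coeff_zero w P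
    have hdiff : P.eval z - P.eval w = ∑ i ∈ Finset.range n,
        (Polynomial.taylor w P).coeff (i + 1) * (z - w) ^ (i + 1) := by
      rw [hT, Finset.sum_range_succ']
      simp [hT0]
    -- coefficient bound
    have hcoeff : ∀ k : ℕ, ‖(Polynomial.taylor w P).coeff k‖ ≤ M ^ k * S / (Nat.factorial k : ℝ) := by
      intro k
      have h1 : (Polynomial.taylor w P).coeff k = (Polynomial.hasseDeriv k P).eval w :=
        Polynomial.taylor_coeff (r := w) (f := P) k
      have h2 : (Nat.factorial k : ℕ) • (Polynomial.hasseDeriv k P) = (Polynomial.derivative)^[k] P := by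
        have := congrFun (Polynomial.factorial_smul_hasseDeriv (R := ℂ) (k := k)) P
        simpa using this
      have h3 : (Nat.factorial k : ℝ) * ‖(Polynomial.hasseDeriv k P).eval w‖ =
          ‖((Polynomial.derivative)^[k] P).eval w‖ := by
        rw [← h2]
        simp [nsmul_eq_mul, norm_mul]
      have h4 : ‖((Polynomial.derivative)^[k] P).eval w‖ ≤ M ^ k * S :=
        le_trans (hle _ w hw) (hiter k)
      have hkpos : (0 : ℝ) < (Nat.factorial k : ℝ) := by exact_mod_cast Nat.factorial_pos k
      rw [h1, le_div_iff₀ hkpos, mul_comm]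
      rw [h3]
      exact h4
    calc ‖P.eval z - P.eval w‖
        = ‖∑ i ∈ Finset.range n,
            (Polynomial.taylor w P).coeff (i + 1) * (z - w) ^ (i + 1)‖ := by rw [hdiff]
      _ ≤ ∑ i ∈ Finset.range n,
            ‖(Polynomial.taylor w P).coeff (i + 1) * (z - w) ^ (i + 1)‖ :=
          norm_sum_le _ _
      _ ≤ ∑ i ∈ Finset.range n, M ^ (i + 1) * S / (Nat.factorial (i + 1) : ℝ) * d ^ (i + 1) := by
          refine Finset.sum_le_sum fun i _ => ?_
          rw [norm_mul, norm_pow]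
          exact mul_le_mul_of_nonneg_right (hcoeff (i + 1)) (pow_nonneg hdnn _)
      _ = S * ∑ i ∈ Finset.range n, (M * d) ^ (i + 1) / (Nat.factorial (i + 1) : ℝ) := by
          rw [Finset.mul_sum]
          refine Finset.sum_congr rfl fun i _ => ?_
          rw [mul_pow]
          ring
      _ ≤ S * (Real.exp (M * d) - 1) := by
          refine mul_le_mul_of_nonneg_left ?_ hSpos.le
          have hxnn : 0 ≤ M * d := mul_nonneg hMpos.le hdnn
          have hsum := Real.sum_le_exp_of_nonneg hxnn (n + 1)
          rw [Finset.sum_range_succ'] at hsum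
          simp only [pow_zero, Nat.factorial_zero, Nat.cast_one, div_one] at hsum
          linarith
  -- the threshold
  set t := Real.log (1 + τ) / M with htdef
  have hlogpos : 0 < Real.log (1 + τ) := Real.log_pos (by linarith)
  have htpos : 0 < t := div_pos hlogpos hMpos
  -- event inclusion
  have hsub : {ω | τ * S < |‖P.eval (U ω)‖ - ‖P.eval (V ω)‖|} ⊆
      {ω | t ≤ ‖U ω - V ω‖} := by
    intro ω hω
    simp only [Set.mem_setOf_eq] at hω ⊢
    have h1 : |‖P.eval (U ω)‖ - ‖P.eval (V ω)‖| ≤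
        ‖P.eval (U ω) - P.eval (V ω)‖ :=
      abs_norm_sub_norm_le _ _
    have h2 := hkey (U ω) (hUK ω) (V ω) (hVK ω)
    have h3 : τ * S < S * (Real.exp (M * ‖U ω - V ω‖) - 1) := by
      calc τ * S < |‖P.eval (U ω)‖ - ‖P.eval (V ω)‖| := hω
        _ ≤ _ := le_trans h1 h2
    have h4 : τ < Real.exp (M * ‖U ω - V ω‖) - 1 := by
      have := lt_of_mul_lt_mul_right (by rw [mul_comm S] at h3; exact h3) hSpos.le
      exact this
    have h5 : Real.log (1 + τ) < M * ‖U ω - V ω‖ := by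
      rw [Real.log_lt_iff_lt_exp (by linarith)]
      linarith
    rw [htdef, div_le_iff₀ hMpos, mul_comm]
    linarith
  -- integrability
  obtain ⟨C, hC⟩ := hK.isBounded.exists_norm_le
  have hfmeas : Measurable fun ω => ‖U ω - V ω‖ :=
    continuous_norm.measurable.comp (hUmeas.sub hVmeas)
  have hfnn : ∀ ω, 0 ≤ ‖U ω - V ω‖ := fun ω => norm_nonneg _
  have hfint : Integrable (fun ω => ‖U ω - V ω‖) ℙ := by
    refine Integrable.mono' (integrable_const (C + C)) hfmeas.aestronglyMeasurable
      (ae_of_all _ fun ω => ?_)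
    rw [Real.norm_eq_abs, abs_of_nonneg (hfnn ω)]
    calc ‖U ω - V ω‖ ≤ ‖U ω‖ + ‖V ω‖ :=
        norm_sub_le _ _
      _ ≤ C + C := by
        have h1 := hC (U ω) (hUK ω)
        have h2 := hC (V ω) (hVK ω)
        linarith
  -- Markov inequality step
  have hmarkov := mul_meas_ge_le_integral_of_nonneg (μ := ℙ)
    (ae_of_all _ hfnn) hfint t
  have hmono : (ℙ {ω | τ * S <
      |‖P.eval (U ω)‖ - ‖P.eval (V ω)‖|}).toReal ≤
      (ℙ {ω | t ≤ ‖U ω - V ω‖}).toReal :=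
    ENNReal.toReal_mono (measure_ne_top _ _) (measure_mono hsub)
  have hint_nn : 0 ≤ ∫ ω, ‖U ω - V ω‖ ∂ℙ := integral_nonneg hfnn
  have hfinal : (ℙ {ω | t ≤ ‖U ω - V ω‖}).toReal ≤
      M / Real.log (1 + τ) * ∫ ω, ‖U ω - V ω‖ ∂ℙ := by
    rw [htdef] at hmarkov
    rw [div_mul_eq_mul_div, le_div_iff₀ hlogpos]
    calc (ℙ {ω | t ≤ ‖U ω - V ω‖}).toReal * Real.log (1 + τ)
        = M * (Real.log (1 + τ) / M * (ℙ {ω | t ≤ ‖U ω - V ω‖}).toReal) := by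
          field_simp
      _ ≤ M * ∫ ω, ‖U ω - V ω‖ ∂ℙ := by
          refine mul_le_mul_of_nonneg_left ?_ hMpos.le
          simpa [htdef, measureReal_def] using hmarkov
  calc (ℙ {ω | τ * S <
      |‖P.eval (U ω)‖ - ‖P.eval (V ω)‖|}).toReal
      ≤ (ℙ {ω | t ≤ ‖U ω - V ω‖}).toReal := hmono
    _ ≤ M / Real.log (1 + τ) * ∫ ω, ‖U ω - V ω‖ ∂ℙ := hfinal
end

section
/- Let K ⊂ ℂ be compact and σ a finite Borel measure on K such that ‖f‖_K = ‖f‖_∞ for every continuous f on K, and such that K satisfies the Markov inequality with constants c_m > 0 and r_m > 0. Let δ > 0 with 2 δ c_m n^{r_m} < ln 2, let w_1, …, w_p ∈ K be a δ-cover for (K, σ), and let u_1, …, u_N ∈ K be points such that for every j ∈ {1, …, p} there exists k ∈ {1, …, N} with |u_k − w_j| ≤ δ. Then for every polynomial P ∈ ℂ[X] of degree at most n, ‖P‖_K ≤ (2 − exp(2 δ c_m n^{r_m}))^{−1} · max_{1 ≤ k ≤ N} |P(u_k)|. -/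
open MeasureTheory

/-- Evaluation of a polynomial at a point of `K` is at most the sup over `K`. -/
lemma le_supK_poly {K : Set ℂ} (hK : IsCompact K) (Q : Polynomial ℂ) {z : ℂ} (hz : z ∈ K) :
    ‖Q.eval z‖ ≤ supK K (fun z => ‖Q.eval z‖) := by
  apply le_csSup
  · exact (hK.image (continuous_norm.comp Q.continuous)).bddAbove
  · exact Set.mem_image_of_mem _ hz

theorem stmt11 {Ω : Type*} [MeasurableSpace Ω]
    (K : Set ℂ) (hK : IsCompact K)
    (σ : Measure ℂ) [IsFiniteMeasure σ] (hσK : σ Kᶜ = 0)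
    (hlinf : ∀ f : ℂ → ℝ, ContinuousOn f K →
      supK K (fun z => |f z|) = essSupK σ (fun z => |f z|))
    (c_m r_m : ℝ) (hcm : 0 < c_m) (hrm : 0 < r_m)
    (hMarkov : ∀ m : ℕ, 1 ≤ m → ∀ P : Polynomial ℂ, P.natDegree ≤ m →
      supK K (fun z => ‖(Polynomial.derivative P).eval z‖) ≤
        c_m * (m : ℝ) ^ r_m * supK K (fun z => ‖P.eval z‖))
    (n : ℕ) (hn : 1 ≤ n)
    (δ : ℝ) (hδ : 0 < δ) (hδsmall : 2 * δ * c_m * (n : ℝ) ^ r_m < Real.log 2)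
    (p : ℕ) (hp : 1 ≤ p) (w : Fin p → ℂ) (hwK : ∀ j, w j ∈ K)
    (hcover : σ (K \ ⋃ j, {z | ‖z - w j‖ ≤ δ}) = 0)
    (N : ℕ) (hN : 1 ≤ N) (u : Fin N → ℂ) (huK : ∀ k, u k ∈ K)
    (hclose : ∀ j : Fin p, ∃ k : Fin N, ‖u k - w j‖ ≤ δ)
    (P : Polynomial ℂ) (hP : P.natDegree ≤ n) :
    supK K (fun z => ‖P.eval z‖) ≤
      (2 - Real.exp (2 * δ * c_m * (n : ℝ) ^ r_m))⁻¹ *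
        ⨆ k : Fin N, ‖P.eval (u k)‖ := by
  classical
  haveI : Nonempty (Fin N) := ⟨⟨0, hN⟩⟩
  set a : ℝ := c_m * (n : ℝ) ^ r_m with ha
  have ha0 : 0 ≤ a := mul_nonneg hcm.le (Real.rpow_nonneg (Nat.cast_nonneg n) r_m)
  set t : ℝ := 2 * δ * c_m * (n : ℝ) ^ r_m with ht
  have ht_eq : t = 2 * δ * a := by rw [ht, ha]; ring
  have ht0 : 0 ≤ t := by
    rw [ht_eq]; positivity
  set M := supK K (fun z => ‖P.eval z‖) with hM
  have hM0 : 0 ≤ M :=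
    le_trans (norm_nonneg _) (le_supK_poly hK P (hwK ⟨0, hp⟩))
  -- iterated Markov inequality
  have hiter : ∀ i : ℕ, ((Polynomial.derivative)^[i] P).natDegree ≤ n ∧
      supK K (fun z => ‖((Polynomial.derivative)^[i] P).eval z‖) ≤ a ^ i * M := by
    intro i
    induction i with
    | zero => simpa [hM] using hP
    | succ i ih =>
      have hdeg : ((Polynomial.derivative)^[i + 1] P).natDegree ≤ n := by
        rw [Function.iterate_succ_apply']
        exact le_trans (Polynomial.natDegree_derivative_le _)
          (le_trans (Nat.sub_le _ _) ih.1)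
      refine ⟨hdeg, ?_⟩
      rw [Function.iterate_succ_apply']
      calc supK K (fun z => ‖(Polynomial.derivative ((Polynomial.derivative)^[i] P)).eval z‖)
          ≤ a * supK K (fun z => ‖((Polynomial.derivative)^[i] P).eval z‖) :=
            hMarkov n hn _ ih.1
        _ ≤ a * (a ^ i * M) := mul_le_mul_of_nonneg_left ih.2 ha0
        _ = a ^ (i + 1) * M := by ring
  -- Taylor expansion bound
  have hTaylor : ∀ z u' : ℂ, u' ∈ K → ‖z - u'‖ ≤ 2 * δ →
      ‖P.eval z‖ ≤ ‖P.eval u'‖ + M * (Real.exp t - 1) := by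
    intro z u' hu' hzu
    have hdeg : (Polynomial.taylor u' P).natDegree < n + 1 := by
      rw [Polynomial.natDegree_taylor]; omega
    have hev : P.eval z =
        ∑ i ∈ Finset.range (n + 1), (Polynomial.taylor u' P).coeff i * (z - u') ^ i := by
      conv_lhs => rw [← Polynomial.taylor_eval_sub u' P z]
      exact Polynomial.eval_eq_sum_range' hdeg _
    have habs : ‖P.eval z‖ ≤
        ∑ i ∈ Finset.range (n + 1),
          ‖(Polynomial.taylor u' P).coeff i‖ * ‖z - u'‖ ^ i := by
      rw [hev]
      refine le_trans (norm_sum_le _ _) ?_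
      simp [map_mul, map_pow]
    rw [Finset.sum_range_succ'] at habs
    have hzero : ‖(Polynomial.taylor u' P).coeff 0‖ * ‖z - u'‖ ^ 0
        = ‖P.eval u'‖ := by
      simp [Polynomial.taylor_coeff_zero]
    -- bound each tail term
    have hterm : ∀ i ∈ Finset.range n,
        ‖(Polynomial.taylor u' P).coeff (i + 1)‖ * ‖z - u'‖ ^ (i + 1)
          ≤ M * (t ^ (i + 1) / (Nat.factorial (i + 1) : ℝ)) := by
      intro i _
      have hfac0 : (0 : ℝ) < (Nat.factorial (i + 1) : ℝ) := by
        exact_mod_cast Nat.factorial_pos (i + 1)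
      -- |coeff (i+1)| * (i+1)! = |(derivative^[i+1] P).eval u'|
      have hcoeff : ((Nat.factorial (i + 1) : ℝ)) *
          ‖(Polynomial.taylor u' P).coeff (i + 1)‖
          = ‖((Polynomial.derivative)^[i + 1] P).eval u'‖ := by
        rw [Polynomial.taylor_coeff]
        have h := congrFun (Polynomial.factorial_smul_hasseDeriv (R := ℂ) (i + 1)) P
        simp only [LinearMap.smul_apply] at h
        rw [← h, nsmul_eq_mul, Polynomial.eval_mul, Polynomial.eval_natCast, norm_mul]
        simp
      have hder : ‖((Polynomial.derivative)^[i + 1] P).eval u'‖ ≤ a ^ (i + 1) * M :=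
        le_trans (le_supK_poly hK _ hu') (hiter (i + 1)).2
      have hc : ‖(Polynomial.taylor u' P).coeff (i + 1)‖
          ≤ a ^ (i + 1) * M / (Nat.factorial (i + 1) : ℝ) := by
        rw [le_div_iff₀ hfac0]
        calc ‖(Polynomial.taylor u' P).coeff (i + 1)‖ * (Nat.factorial (i + 1) : ℝ)
            = (Nat.factorial (i + 1) : ℝ) *
              ‖(Polynomial.taylor u' P).coeff (i + 1)‖ := by ring
          _ = ‖((Polynomial.derivative)^[i + 1] P).eval u'‖ := hcoeff
          _ ≤ a ^ (i + 1) * M := hder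
      have hpow : ‖z - u'‖ ^ (i + 1) ≤ (2 * δ) ^ (i + 1) :=
        pow_le_pow_left₀ (norm_nonneg _) hzu _
      calc ‖(Polynomial.taylor u' P).coeff (i + 1)‖ * ‖z - u'‖ ^ (i + 1)
          ≤ (a ^ (i + 1) * M / (Nat.factorial (i + 1) : ℝ)) * (2 * δ) ^ (i + 1) := by
            apply mul_le_mul hc hpow (pow_nonneg (norm_nonneg _) _)
            positivity
        _ = M * (t ^ (i + 1) / (Nat.factorial (i + 1) : ℝ)) := by
            rw [ht_eq, mul_pow]; ring
    have hsum : ∑ i ∈ Finset.range n, t ^ (i + 1) / (Nat.factorial (i + 1) : ℝ)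
        ≤ Real.exp t - 1 := by
      have h := Real.sum_le_exp_of_nonneg ht0 (n + 1)
      rw [Finset.sum_range_succ'] at h
      simp only [pow_zero, Nat.factorial_zero, Nat.cast_one, div_one] at h
      linarith
    calc ‖P.eval z‖
        ≤ (∑ i ∈ Finset.range n,
            ‖(Polynomial.taylor u' P).coeff (i + 1)‖ * ‖z - u'‖ ^ (i + 1))
          + ‖(Polynomial.taylor u' P).coeff 0‖ * ‖z - u'‖ ^ 0 := habs
      _ ≤ (∑ i ∈ Finset.range n, M * (t ^ (i + 1) / (Nat.factorial (i + 1) : ℝ)))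
          + ‖P.eval u'‖ := by
          rw [hzero]
          exact add_le_add_left (Finset.sum_le_sum hterm) _
      _ = ‖P.eval u'‖ +
          M * ∑ i ∈ Finset.range n, t ^ (i + 1) / (Nat.factorial (i + 1) : ℝ) := by
          rw [← Finset.mul_sum]; ring
      _ ≤ ‖P.eval u'‖ + M * (Real.exp t - 1) :=
          add_le_add_right (mul_le_mul_of_nonneg_left hsum hM0) _
  -- the sup over the sampled points
  set C : ℝ := ⨆ k : Fin N, ‖P.eval (u k)‖ with hCdef
  have hCk : ∀ k : Fin N, ‖P.eval (u k)‖ ≤ C := fun k =>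
    le_ciSup (f := fun k : Fin N => ‖P.eval (u k)‖)
      (Set.Finite.bddAbove (Set.finite_range _)) k
  have hC0 : 0 ≤ C := le_trans (norm_nonneg _) (hCk ⟨0, hN⟩)
  set B : ℝ := C + M * (Real.exp t - 1) with hBdef
  have hB0 : 0 ≤ B := by
    have : (0 : ℝ) ≤ M * (Real.exp t - 1) :=
      mul_nonneg hM0 (by linarith [Real.one_le_exp ht0])
    linarith
  -- a.e. bound
  have hnull : σ (Kᶜ ∪ (K \ ⋃ j, {z | ‖z - w j‖ ≤ δ})) = 0 :=
    measure_union_null hσK hcover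
  have hae : ∀ᵐ z ∂σ, ENNReal.ofReal (‖P.eval z‖) ≤ ENNReal.ofReal B := by
    filter_upwards [measure_eq_zero_iff_ae_notMem.mp hnull] with z hz
    simp only [Set.mem_union, Set.mem_compl_iff, Set.mem_diff, not_or, not_not, not_and,
      not_not] at hz
    obtain ⟨hzK, hzball⟩ := hz
    obtain ⟨j, hzj⟩ := Set.mem_iUnion.mp (hzball hzK)
    obtain ⟨k, hk⟩ := hclose j
    have hdist : ‖z - u k‖ ≤ 2 * δ := by
      calc ‖z - u k‖ = ‖(z - w j) - (u k - w j)‖ := by ring_nf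
        _ ≤ ‖z - w j‖ + ‖u k - w j‖ := by
            simpa using norm_sub_le (z - w j) (u k - w j)
        _ ≤ 2 * δ := by
            have : ‖z - w j‖ ≤ δ := hzj
            linarith
    apply ENNReal.ofReal_le_ofReal
    calc ‖P.eval z‖ ≤ ‖P.eval (u k)‖ + M * (Real.exp t - 1) :=
          hTaylor z (u k) (huK k) hdist
      _ ≤ B := by rw [hBdef]; linarith [hCk k]
  -- identify sup norm with essential sup norm
  have hMess : M = essSupK σ (fun z => ‖P.eval z‖) := by
    have hcont : ContinuousOn (fun z => ‖P.eval z‖) K :=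
      (continuous_norm.comp P.continuous).continuousOn
    have h := hlinf (fun z => ‖P.eval z‖) hcont
    have heq : (fun z => |‖P.eval z‖|) = fun z => ‖P.eval z‖ :=
      funext fun z => abs_of_nonneg (norm_nonneg _)
    rw [heq] at h
    exact h
  have hMB : M ≤ B := by
    rw [hMess]
    unfold essSupK
    exact ENNReal.toReal_le_of_le_ofReal hB0 (essSup_le_of_ae_le _ hae)
  -- conclude
  have hexp : Real.exp t < 2 := by
    calc Real.exp t < Real.exp (Real.log 2) := Real.exp_lt_exp.mpr hδsmall
      _ = 2 := Real.exp_log two_pos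
  have hpos : 0 < 2 - Real.exp t := by linarith
  have hfin : (2 - Real.exp t) * M ≤ C := by
    rw [hBdef] at hMB; nlinarith
  calc M = (2 - Real.exp t)⁻¹ * ((2 - Real.exp t) * M) := by
        field_simp
    _ ≤ (2 - Real.exp t)⁻¹ * C :=
        mul_le_mul_of_nonneg_left hfin (inv_nonneg.mpr hpos.le)
end

section
/- Let K ⊂ ℂ be compact and σ a finite Borel measure on K with σ(K) > 0, such that ‖f‖_K = ‖f‖_∞ for every continuous f on K and such that (K, σ) satisfies the Nikolskii inequality with constants c_ℓ > 0 and r_ℓ > 0. Let (Z_n)_{n ≥ 0} be random Leja points for (K, σ): for every n ≥ 1, conditionally on (Z_0, …, Z_{n−1}), the law of Z_n is absolutely continuous with respect to σ with density proportional to z ↦ |π_n(z)| = ∏_{j=0}^{n−1} |z − Z_j|. Then for every β ≥ 0 and every n ≥ 1, ℙ( |π_n(Z_n)| < n^{−β} ‖π_n‖_K ) ≤ σ(K) c_ℓ n^{r_ℓ − β}. -/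
open MeasureTheory Finset
open scoped ENNReal

lemma measurable_sSup_image {α : Type*} [MeasurableSpace α] {K : Set ℂ}
    (hK : IsCompact K) (hKne : K.Nonempty) {p : α → ℂ → ℝ}
    (hpm : ∀ w, Measurable (fun x => p x w)) (hpc : ∀ x, Continuous (p x)) :
    Measurable (fun x => sSup (p x '' K)) := by
  obtain ⟨D, hDK, hDc, hKD⟩ := hK.isSeparable.exists_countable_dense_subset
  have hDne : D.Nonempty := by
    rcases hKne with ⟨w, hw⟩
    exact closure_nonempty_iff.mp ⟨w, hKD hw⟩
  obtain ⟨e, he⟩ := Set.Countable.exists_eq_range hDc hDne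
  have key : ∀ x, sSup (p x '' K) = ⨆ k, p x (e k) := by
    intro x
    have hbdd : BddAbove (p x '' K) := (hK.image (hpc x)).bddAbove
    have hDsub : p x '' D ⊆ p x '' K := Set.image_mono hDK
    have hbddD : BddAbove (p x '' D) := hbdd.mono hDsub
    have h1 : sSup (p x '' D) ≤ sSup (p x '' K) :=
      csSup_le_csSup hbdd (hDne.image _) hDsub
    have h2 : sSup (p x '' K) ≤ sSup (p x '' D) := by
      apply csSup_le (hKne.image _)
      rintro y ⟨w, hw, rfl⟩
      have hwc : p x w ∈ closure (p x '' D) :=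
        ((hpc x).continuousWithinAt).mem_closure_image (hKD hw)
      have hsub : closure (p x '' D) ⊆ Set.Iic (sSup (p x '' D)) :=
        closure_minimal (fun y hy => le_csSup hbddD hy) isClosed_Iic
      exact hsub hwc
    have himg : p x '' D = Set.range (fun k => p x (e k)) := by
      rw [he, ← Set.range_comp]; rfl
    rw [le_antisymm h2 h1, himg, ← sSup_range]
  have heq : (fun x => sSup (p x '' K)) = fun x => ⨆ k, p x (e k) := funext key
  rw [heq]
  exact Measurable.iSup fun k => hpm (e k)

set_option maxHeartbeats 2000000 in
theorem stmt19 {Ω : Type*} [MeasurableSpace Ω] (ℙ : Measure Ω) [IsProbabilityMeasure ℙ]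
    (K : Set ℂ) (hK : IsCompact K)
    (σ : Measure ℂ) [IsFiniteMeasure σ] (hσK : σ Kᶜ = 0) (hσpos : 0 < σ K)
    (hlinf : ∀ f : ℂ → ℝ, ContinuousOn f K →
      supK K (fun z => |f z|) = essSupK σ (fun z => |f z|))
    (c_ℓ r_ℓ : ℝ) (hcℓ : 0 < c_ℓ) (hrℓ : 0 < r_ℓ)
    (hNik : ∀ m : ℕ, 1 ≤ m → ∀ P : Polynomial ℂ, P.natDegree ≤ m →
      essSupK σ (fun z => ‖P.eval z‖) ≤
        c_ℓ * (m : ℝ) ^ r_ℓ * ∫ z, ‖P.eval z‖ ∂σ)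
    -- the random Leja points
    (Z : ℕ → Ω → ℂ) (hZmeas : ∀ n, Measurable (Z n)) (hZK : ∀ n ω, Z n ω ∈ K)
    (hpos : ∀ n : ℕ, 1 ≤ n → ∀ᵐ ω ∂ℙ,
      0 < ∫ w, ‖∏ j ∈ Finset.range n, (w - Z j ω)‖ ∂σ)
    -- conditionally on (Z_0, …, Z_{n−1}), the law of Z_n has density proportional
    -- to |π_n| with respect to σ
    (hcond : ∀ n : ℕ, 1 ≤ n → ∀ g : ℂ → ℝ, Measurable g → (∀ z, |g z| ≤ 1) →
      ℙ[(fun ω => g (Z n ω)) |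
          MeasurableSpace.comap (fun ω (j : Fin n) => Z j ω)
            (inferInstance : MeasurableSpace (Fin n → ℂ))]
        =ᵐ[ℙ] fun ω =>
          (∫ w, g w * ‖∏ j ∈ Finset.range n, (w - Z j ω)‖ ∂σ) /
            ∫ w, ‖∏ j ∈ Finset.range n, (w - Z j ω)‖ ∂σ)
    (β : ℝ) (hβ : 0 ≤ β) (n : ℕ) (hn : 1 ≤ n) :
    (ℙ {ω | ‖∏ j ∈ Finset.range n, (Z n ω - Z j ω)‖ <
        (n : ℝ) ^ (-β) *
          supK K (fun w => ‖∏ j ∈ Finset.range n, (w - Z j ω)‖)}).toReal ≤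
      (σ K).toReal * c_ℓ * (n : ℝ) ^ (r_ℓ - β) := by
  classical
  have hnpos : (0:ℝ) < n := by exact_mod_cast hn
  set X : Ω → (Fin n → ℂ) := fun ω (j : Fin n) => Z j ω with hX
  have hXmeas : Measurable X := measurable_pi_lambda _ fun j => hZmeas j
  set p : (Fin n → ℂ) → ℂ → ℝ := fun x w => ‖∏ j : Fin n, (w - x j)‖ with hp
  have hpuc : Continuous (Function.uncurry p) :=
    continuous_norm.comp (continuous_finset_prod _ fun j _ =>
      continuous_snd.sub ((continuous_apply j).comp continuous_fst))
  have hpc : ∀ x, Continuous (p x) := by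
    intro x
    have h : Continuous fun w : ℂ => ‖∏ j : Fin n, (w - x j)‖ :=
      continuous_norm.comp
        (continuous_finset_prod _ fun j _ => continuous_id.sub continuous_const)
    exact h
  have hpm : ∀ w, Measurable (fun x => p x w) := by
    intro w
    have h : Continuous fun y : Fin n → ℂ => ‖∏ j : Fin n, (w - y j)‖ :=
      continuous_norm.comp
        (continuous_finset_prod _ fun j _ => continuous_const.sub (continuous_apply j))
    exact h.measurable
  have hprod : ∀ (ω : Ω) (w : ℂ),
      ∏ j ∈ Finset.range n, (w - Z j ω) = ∏ j : Fin n, (w - X ω j) :=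
    fun ω w => (Fin.prod_univ_eq_prod_range (fun j => w - Z j ω) n).symm
  have hKne : K.Nonempty := by
    rcases Set.eq_empty_or_nonempty K with h | h
    · exfalso; rw [h] at hσpos; simp at hσpos
    · exact h
  have hKmem : ∀ᵐ w ∂σ, w ∈ K := by
    rw [MeasureTheory.ae_iff]
    exact hσK
  set S : (Fin n → ℂ) → ℝ := fun x => sSup (p x '' K) with hS
  have hSmeas : Measurable S := measurable_sSup_image hK hKne hpm hpc
  have hSub : ∀ x w, w ∈ K → p x w ≤ S x := fun x w hw =>
    le_csSup ((hK.image (hpc x)).bddAbove) ⟨w, hw, rfl⟩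
  obtain ⟨w₀, hw₀⟩ := hKne
  have hSnn : ∀ x, 0 ≤ S x := fun x =>
    le_trans (norm_nonneg _) (hSub x w₀ hw₀)
  have hpInt : ∀ x, Integrable (p x) σ := by
    intro x
    refine Integrable.mono' (integrable_const (S x)) ((hpc x).aestronglyMeasurable) ?_
    filter_upwards [hKmem] with w hw
    rw [Real.norm_eq_abs, abs_of_nonneg (norm_nonneg _)]
    exact hSub x w hw
  set I : (Fin n → ℂ) → ℝ := fun x => ∫ w, p x w ∂σ with hI
  have hInn : ∀ x, 0 ≤ I x := fun x => integral_nonneg fun w => norm_nonneg _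
  have hImeas : Measurable I :=
    (hpuc.stronglyMeasurable.integral_prod_right' (ν := σ)).measurable
  have hσuniv : σ Set.univ = σ K := by
    have h := measure_add_measure_compl (μ := σ) hK.isClosed.measurableSet
    rw [hσK, add_zero] at h
    exact h.symm
  -- Nikolskii bound
  have hS_le : ∀ x, S x ≤ c_ℓ * (n:ℝ) ^ r_ℓ * I x := by
    intro x
    have hPeval : ∀ w : ℂ,
        (∏ j : Fin n, (Polynomial.X - Polynomial.C (x j))).eval w = ∏ j : Fin n, (w - x j) := by
      intro w; rw [Polynomial.eval_prod]; exact Finset.prod_congr rfl fun j _ => by simp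
    have hdeg : (∏ j : Fin n, (Polynomial.X - Polynomial.C (x j))).natDegree ≤ n := by
      refine le_trans (Polynomial.natDegree_prod_le _ _) ?_
      simp [Polynomial.natDegree_X_sub_C]
    have h2 := hNik n hn _ hdeg
    have habsfun :
        (fun z => ‖(∏ j : Fin n, (Polynomial.X - Polynomial.C (x j))).eval z‖) = p x := by
      funext z; rw [hPeval z]
    rw [habsfun] at h2
    have h1 := hlinf (p x) ((hpc x).continuousOn)
    have habs : (fun z => |p x z|) = p x := funext fun z => abs_of_nonneg (norm_nonneg _)
    rw [habs] at h1
    exact h1.le.trans h2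
  -- the kernel
  set dens : (Fin n → ℂ) → ℂ → ℝ≥0∞ := fun x w => ENNReal.ofReal (p x w / I x) with hdens
  have hdensm : Measurable (Function.uncurry dens) :=
    ENNReal.measurable_ofReal.comp ((hpuc.measurable).div (hImeas.comp measurable_fst))
  set κ : ProbabilityTheory.Kernel (Fin n → ℂ) ℂ :=
    ProbabilityTheory.Kernel.withDensity (ProbabilityTheory.Kernel.const _ σ) dens with hκ
  have hκ_apply : ∀ x (t : Set ℂ), κ x t = ∫⁻ w in t, dens x w ∂σ := by
    intro x t
    rw [hκ, ProbabilityTheory.Kernel.withDensity_apply' _ hdensm,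
      ProbabilityTheory.Kernel.const_apply]
  have hκt : ∀ x (t : Set ℂ), κ x t = ENNReal.ofReal ((∫ w in t, p x w ∂σ) / I x) := by
    intro x t
    rw [hκ_apply x t,
      ← ofReal_integral_eq_lintegral_ofReal (((hpInt x).restrict).div_const _)
        (Filter.Eventually.of_forall fun w => div_nonneg (norm_nonneg _) (hInn x)),
      integral_div]
  haveI hκfin : ProbabilityTheory.IsFiniteKernel κ := by
    refine ⟨⟨1, ENNReal.one_lt_top, fun x => ?_⟩⟩
    have h0 : κ x Set.univ = ENNReal.ofReal (I x / I x) := by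
      rw [hκt x Set.univ]
      congr 2
      rw [Measure.restrict_univ]
    rw [h0]
    rcases eq_or_lt_of_le (hInn x) with h | h
    · rw [← h]; simp
    · rw [div_self h.ne']; simp
  -- the two measures on the product space
  set μ₁ : Measure ((Fin n → ℂ) × ℂ) := Measure.map (fun ω => (X ω, Z n ω)) ℙ with hμ₁def
  set μ₂ : Measure ((Fin n → ℂ) × ℂ) := (Measure.map X ℙ).compProd κ with hμ₂def
  haveI : IsProbabilityMeasure (Measure.map X ℙ) := Measure.isProbabilityMeasure_map hXmeas.aemeasurable
  haveI : IsProbabilityMeasure μ₁ :=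
    Measure.isProbabilityMeasure_map ((hXmeas.prodMk (hZmeas n)).aemeasurable)
  have hIae : ∀ᵐ ω ∂ℙ, 0 < I (X ω) := by
    filter_upwards [hpos n hn] with ω hω
    have h2 : (fun w => ‖∏ j ∈ Finset.range n, (w - Z j ω)‖) = p (X ω) := by
      funext w; rw [hprod ω w]
    rwa [h2] at hω
  have hF : MeasurableSpace.comap (fun ω (j : Fin n) => Z j ω)
      (inferInstance : MeasurableSpace (Fin n → ℂ)) ≤ _ := hXmeas.comap_le
  haveI : SigmaFinite (ℙ.trim hF) := by infer_instance
  -- rectangle identity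
  have hrect : ∀ s t, MeasurableSet s → MeasurableSet t → μ₁ (s ×ˢ t) = μ₂ (s ×ˢ t) := by
    intro s t hs ht
    set g : ℂ → ℝ := t.indicator fun _ => (1:ℝ) with hg
    have hgm : Measurable g := measurable_const.indicator ht
    have hgb : ∀ z, |g z| ≤ 1 := by
      intro z; by_cases h : z ∈ t <;>
        simp [hg, Set.indicator_of_mem, Set.indicator_of_notMem, h]
    set J : (Fin n → ℂ) → ℝ := fun x => ∫ w in t, p x w ∂σ with hJ
    have hJm : Measurable J :=
      (hpuc.stronglyMeasurable.integral_prod_right' (ν := σ.restrict t)).measurable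
    have hJnn : ∀ x, 0 ≤ J x := fun x => integral_nonneg fun w => norm_nonneg _
    have hJle : ∀ x, J x ≤ I x := fun x =>
      setIntegral_le_integral (hpInt x) (Filter.Eventually.of_forall fun w => norm_nonneg _)
    have hEq := hcond n hn g hgm hgb
    have hRHS : (fun ω => (∫ w, g w * ‖∏ j ∈ Finset.range n, (w - Z j ω)‖ ∂σ) /
        ∫ w, ‖∏ j ∈ Finset.range n, (w - Z j ω)‖ ∂σ)
        = fun ω => J (X ω) / I (X ω) := by
      funext ω
      have h1 : (fun w => g w * ‖∏ j ∈ Finset.range n, (w - Z j ω)‖)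
          = t.indicator (fun w => p (X ω) w) := by
        funext w
        by_cases h : w ∈ t
        · simp only [hg, Set.indicator_of_mem h, one_mul]
          rw [hprod ω w]
        · simp [hg, Set.indicator_of_notMem h]
      have h2 : (fun w => ‖∏ j ∈ Finset.range n, (w - Z j ω)‖) = p (X ω) := by
        funext w; rw [hprod ω w]
      rw [h1, h2, integral_indicator ht]
    rw [hRHS] at hEq
    have hgint : Integrable (fun ω => g (Z n ω)) ℙ := by
      refine Integrable.mono' (integrable_const 1) ((hgm.comp (hZmeas n)).aestronglyMeasurable) ?_
      exact Filter.Eventually.of_forall fun ω => by rw [Real.norm_eq_abs]; exact hgb _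
    have hsF : MeasurableSet[MeasurableSpace.comap (fun ω (j : Fin n) => Z j ω)
        (inferInstance : MeasurableSpace (Fin n → ℂ))] (X ⁻¹' s) := ⟨s, hs, rfl⟩
    have hXs : MeasurableSet (X ⁻¹' s) := hXmeas hs
    have hμ₁r : μ₁ (s ×ˢ t) = ℙ (X ⁻¹' s ∩ Z n ⁻¹' t) := by
      rw [hμ₁def, Measure.map_apply (hXmeas.prodMk (hZmeas n)) (hs.prod ht),
        Set.mk_preimage_prod]
    have hset : ∫ ω in X ⁻¹' s, g (Z n ω) ∂ℙ = (ℙ (X ⁻¹' s ∩ Z n ⁻¹' t)).toReal := by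
      have h3 : (fun ω => g (Z n ω)) = (Z n ⁻¹' t).indicator fun _ => (1:ℝ) := by
        funext ω; by_cases h : Z n ω ∈ t
        · simp [hg, Set.indicator_of_mem, h]
        · simp [hg, Set.indicator_of_notMem, h]
      rw [h3, setIntegral_indicator ((hZmeas n) ht), setIntegral_const, smul_eq_mul, mul_one]; rfl
    have hcondint : ∫ ω in X ⁻¹' s, J (X ω) / I (X ω) ∂ℙ = (ℙ (X ⁻¹' s ∩ Z n ⁻¹' t)).toReal := by
      rw [← hset, ← setIntegral_condExp hF hgint hsF]
      exact setIntegral_congr_ae hXs (hEq.mono fun ω h _ => h.symm)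
    set f : Ω → ℝ := fun ω => Set.indicator s (fun x => J x / I x) (X ω) with hf
    have hfm : Measurable f := ((hJm.div hImeas).indicator hs).comp hXmeas
    have hfnn : ∀ ω, 0 ≤ f ω := by
      intro ω; by_cases h : X ω ∈ s
      · simp only [hf, Set.indicator_of_mem h]; exact div_nonneg (hJnn _) (hInn _)
      · simp [hf, Set.indicator_of_notMem h]
    have hfle : ∀ᵐ ω ∂ℙ, f ω ≤ 1 := by
      filter_upwards [hIae] with ω hω
      by_cases h : X ω ∈ s
      · simp only [hf, Set.indicator_of_mem h]
        exact (div_le_one hω).mpr (hJle _)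
      · simp [hf, Set.indicator_of_notMem h]
    have hfint : Integrable f ℙ := by
      refine Integrable.mono' (integrable_const 1) hfm.aestronglyMeasurable ?_
      filter_upwards [hfle] with ω hω
      rw [Real.norm_eq_abs, abs_of_nonneg (hfnn ω)]; exact hω
    have hμ₂r : μ₂ (s ×ˢ t) = ENNReal.ofReal (∫ ω, f ω ∂ℙ) := by
      rw [hμ₂def, Measure.compProd_apply (hs.prod ht),
        lintegral_map (ProbabilityTheory.Kernel.measurable_kernel_prodMk_left (hs.prod ht)) hXmeas]
      have hpt : ∀ ω, κ (X ω) (Prod.mk (X ω) ⁻¹' s ×ˢ t) = ENNReal.ofReal (f ω) := by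
        intro ω
        by_cases h : X ω ∈ s
        · rw [Set.mk_preimage_prod_right h, hκt (X ω) t]
          simp only [hf, Set.indicator_of_mem h]; rfl
        · rw [Set.mk_preimage_prod_right_eq_empty h]
          simp [hf, Set.indicator_of_notMem h]
      rw [lintegral_congr hpt]
      exact (ofReal_integral_eq_lintegral_ofReal hfint (Filter.Eventually.of_forall hfnn)).symm
    have hff : ∫ ω, f ω ∂ℙ = (ℙ (X ⁻¹' s ∩ Z n ⁻¹' t)).toReal := by
      have hind : f = (X ⁻¹' s).indicator (fun ω => J (X ω) / I (X ω)) := by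
        funext ω; by_cases h : X ω ∈ s
        · simp [hf, Set.indicator_of_mem, h, Set.mem_preimage]
        · simp [hf, Set.indicator_of_notMem, h, Set.mem_preimage]
      rw [hind, integral_indicator hXs, hcondint]
    rw [hμ₁r, hμ₂r, hff, ENNReal.ofReal_toReal (measure_ne_top _ _)]
  -- the two measures coincide
  have hext : μ₁ = μ₂ := by
    refine ext_of_generate_finite _ generateFrom_prod.symm isPiSystem_prod ?_ ?_
    · rintro _ ⟨s, hs, t, ht, rfl⟩
      exact hrect s t hs ht
    · rw [← Set.univ_prod_univ]
      exact hrect _ _ MeasurableSet.univ MeasurableSet.univ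
  -- the bad set
  set C : Set ((Fin n → ℂ) × ℂ) := {q | p q.1 q.2 < (n : ℝ) ^ (-β) * S q.1} with hC
  have hCmeas : MeasurableSet C :=
    measurableSet_lt hpuc.measurable (measurable_const.mul (hSmeas.comp measurable_fst))
  have hpre : (fun ω => (X ω, Z n ω)) ⁻¹' C
      = {ω | ‖∏ j ∈ Finset.range n, (Z n ω - Z j ω)‖ <
          (n : ℝ) ^ (-β) *
            supK K (fun w => ‖∏ j ∈ Finset.range n, (w - Z j ω)‖)} := by
    ext ω
    simp only [Set.mem_preimage, hC, Set.mem_setOf_eq]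
    have e1 : p (X ω) (Z n ω) = ‖∏ j ∈ Finset.range n, (Z n ω - Z j ω)‖ :=
      congrArg norm (hprod ω (Z n ω)).symm
    have e2 : S (X ω) = supK K (fun w => ‖∏ j ∈ Finset.range n, (w - Z j ω)‖) := by
      have h2 : (fun w => ‖∏ j ∈ Finset.range n, (w - Z j ω)‖) = p (X ω) := by
        funext w; rw [hprod ω w]
      rw [hS, supK, h2]
    rw [e1, e2]
  have hμ₂C : μ₂ C ≤ ENNReal.ofReal (c_ℓ * (n : ℝ) ^ (r_ℓ - β)) * σ K := by
    rw [hμ₂def, Measure.compProd_apply hCmeas]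
    have hbound : ∀ x, κ x (Prod.mk x ⁻¹' C) ≤ ENNReal.ofReal (c_ℓ * (n : ℝ) ^ (r_ℓ - β)) * σ K := by
      intro x
      rw [hκ_apply x _]
      have step1 : ∫⁻ w in Prod.mk x ⁻¹' C, dens x w ∂σ
          ≤ ∫⁻ _ in Prod.mk x ⁻¹' C, ENNReal.ofReal ((n:ℝ)^(-β) * S x / I x) ∂σ := by
        refine setLIntegral_mono measurable_const ?_
        intro w hw
        refine ENNReal.ofReal_le_ofReal ?_
        rcases eq_or_lt_of_le (hInn x) with h0 | h0
        · rw [← h0, div_zero, div_zero]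
        · exact (div_le_div_iff_of_pos_right h0).mpr (le_of_lt hw)
      refine step1.trans ?_
      rw [setLIntegral_const]
      refine mul_le_mul ?_ ?_ (by positivity) (by positivity)
      · refine ENNReal.ofReal_le_ofReal ?_
        rcases eq_or_lt_of_le (hInn x) with h0 | h0
        · rw [← h0, div_zero]; positivity
        · rw [div_le_iff₀ h0]
          calc (n:ℝ)^(-β) * S x ≤ (n:ℝ)^(-β) * (c_ℓ * (n:ℝ)^r_ℓ * I x) :=
                mul_le_mul_of_nonneg_left (hS_le x) (Real.rpow_nonneg hnpos.le _)
            _ = c_ℓ * (n:ℝ)^(r_ℓ - β) * I x := by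
                rw [Real.rpow_sub hnpos, Real.rpow_neg hnpos.le]
                field_simp
      · exact le_trans (measure_mono (Set.subset_univ _)) (le_of_eq hσuniv)
    calc ∫⁻ x, κ x (Prod.mk x ⁻¹' C) ∂(Measure.map X ℙ)
        ≤ ∫⁻ _, ENNReal.ofReal (c_ℓ * (n : ℝ) ^ (r_ℓ - β)) * σ K ∂(Measure.map X ℙ) :=
          lintegral_mono hbound
      _ = ENNReal.ofReal (c_ℓ * (n : ℝ) ^ (r_ℓ - β)) * σ K := by
          rw [lintegral_const, measure_univ, mul_one]
  have hPA : ℙ {ω | ‖∏ j ∈ Finset.range n, (Z n ω - Z j ω)‖ <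
      (n : ℝ) ^ (-β) *
        supK K (fun w => ‖∏ j ∈ Finset.range n, (w - Z j ω)‖)} = μ₂ C := by
    calc ℙ {ω | ‖∏ j ∈ Finset.range n, (Z n ω - Z j ω)‖ <
        (n : ℝ) ^ (-β) *
          supK K (fun w => ‖∏ j ∈ Finset.range n, (w - Z j ω)‖)}
        = ℙ ((fun ω => (X ω, Z n ω)) ⁻¹' C) := by rw [hpre]
      _ = μ₁ C := (Measure.map_apply (hXmeas.prodMk (hZmeas n)) hCmeas).symm
      _ = μ₂ C := by rw [hext]
  rw [hPA]
  have hfin : ENNReal.ofReal (c_ℓ * (n : ℝ) ^ (r_ℓ - β)) * σ K ≠ ⊤ :=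
    ENNReal.mul_ne_top ENNReal.ofReal_ne_top (measure_ne_top σ K)
  refine le_trans (ENNReal.toReal_mono hfin hμ₂C) ?_
  rw [ENNReal.toReal_mul, ENNReal.toReal_ofReal (by positivity)]
  exact le_of_eq (by ring)
end
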